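/- arXiv:2204.00072 — 10 statements merged into one kernel-verified Lean document; each statement's English description precedes it below -/
import Mathlib

section
/- The number of cyclic-interval partitions of the set {1,...,n} equals 2^n - n, where a cyclic-interval partition is a set partition each of whose blocks is an interval {i, i+1, ..., j} or the complement of an interval in {1,...,n}. -/
/-- A block is a (possibly one-element) interval `{i, i+1, ..., j}` of `Fin n`. -/
def IsIntervalBlock {n : ℕ} (B : Finset (Fin n)) : Prop :=
  ∃ i j : Fin n, B = Finset.Icc i j

/-- A set partition of `{1,…,n}` (modeled as `Fin n`) each of whose blocks is an
interval or the complement of an interval. -/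
def IsCyclicIntervalPartition {n : ℕ} (P : Finset (Finset (Fin n))) : Prop :=
  (∀ B ∈ P, B.Nonempty) ∧
  (∀ B ∈ P, ∀ C ∈ P, B ≠ C → Disjoint B C) ∧
  (P.sup id = Finset.univ) ∧
  (∀ B ∈ P, IsIntervalBlock B ∨ ∃ C : Finset (Fin n), IsIntervalBlock C ∧ B = Cᶜ)

/-!
Call `i` a cut of a partition `P` when `i` and its cyclic successor `i + 1` lie in different
blocks. Every block of a cyclic-interval partition is an arc of the cycle `Fin n`, so two points
lie in the same block iff one of the two arcs between them contains no cut: a cyclic-interval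
partition is determined by its set of cuts. That set never has exactly one element `i`, since
otherwise `i + 1, i + 2, …, i` would all be joined going once around the cycle. Conversely every
`S` with `#S ≠ 1` is the set of cuts of the partition into the arcs between consecutive points
of `S` (a single block when `S = ∅`). So cyclic-interval partitions correspond to the `2 ^ n - n`
subsets of `Fin n` of size other than `1`.
-/

open Finset

section SetPartition

variable {α : Type*}

def SameBlock (P : Finset (Finset α)) (x y : α) : Prop :=
  ∃ B ∈ P, x ∈ B ∧ y ∈ B

theorem SameBlock.symm {P : Finset (Finset α)} {x y : α} (h : SameBlock P x y) :
    SameBlock P y x :=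
  let ⟨B, hB, hx, hy⟩ := h; ⟨B, hB, hy, hx⟩

variable [Fintype α] [DecidableEq α]

def IsSetPartition (P : Finset (Finset α)) : Prop :=
  (∀ B ∈ P, B.Nonempty) ∧ (∀ B ∈ P, ∀ C ∈ P, B ≠ C → Disjoint B C) ∧
    P.sup id = univ

namespace IsSetPartition

variable {P Q : Finset (Finset α)} {B C : Finset α} {x y z : α}

theorem exists_mem (hP : IsSetPartition P) (x : α) : ∃ B ∈ P, x ∈ B := by
  simpa using mem_sup.1 (hP.2.2 ▸ mem_univ x)

theorem eq_of_mem_of_mem (hP : IsSetPartition P) (hB : B ∈ P) (hC : C ∈ P) (hxB : x ∈ B)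
    (hxC : x ∈ C) : B = C := by
  by_contra h
  exact disjoint_left.1 (hP.2.1 B hB C hC h) hxB hxC

theorem sameBlock_refl (hP : IsSetPartition P) (x : α) : SameBlock P x x :=
  let ⟨B, hB, hx⟩ := hP.exists_mem x; ⟨B, hB, hx, hx⟩

theorem sameBlock_trans (hP : IsSetPartition P) (hxy : SameBlock P x y)
    (hyz : SameBlock P y z) : SameBlock P x z := by
  obtain ⟨B, hB, hx, hy⟩ := hxy
  obtain ⟨C, hC, hy', hz⟩ := hyz
  exact ⟨B, hB, hx, hP.eq_of_mem_of_mem hC hB hy' hy ▸ hz⟩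

theorem mem_iff_sameBlock (hP : IsSetPartition P) (hB : B ∈ P) (hx : x ∈ B) :
    y ∈ B ↔ SameBlock P x y :=
  ⟨fun hy => ⟨B, hB, hx, hy⟩,
    fun ⟨_, hC, hxC, hyC⟩ => hP.eq_of_mem_of_mem hC hB hxC hx ▸ hyC⟩

theorem subset_of_sameBlock_iff (hP : IsSetPartition P) (hQ : IsSetPartition Q)
    (h : ∀ x y, SameBlock P x y ↔ SameBlock Q x y) : P ⊆ Q := by
  intro B hB
  obtain ⟨x, hx⟩ := hP.1 B hB
  obtain ⟨C, hC, hxC⟩ := hQ.exists_mem x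
  convert hC
  ext y
  rw [hP.mem_iff_sameBlock hB hx, hQ.mem_iff_sameBlock hC hxC, h]

theorem eq_of_sameBlock_iff (hP : IsSetPartition P) (hQ : IsSetPartition Q)
    (h : ∀ x y, SameBlock P x y ↔ SameBlock Q x y) : P = Q :=
  (hP.subset_of_sameBlock_iff hQ h).antisymm
    (hQ.subset_of_sameBlock_iff hP fun x y => (h x y).symm)

end IsSetPartition

theorem Finpartition.isSetPartition (F : Finpartition (univ : Finset α)) :
    IsSetPartition F.parts :=
  ⟨fun _ => F.nonempty_of_mem_parts, fun _ hB _ hC => F.disjoint hB hC, F.sup_parts⟩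

theorem sameBlock_ofSetoid_ker {β : Type*} (f : α → β) [DecidableRel (Setoid.ker f)]
    {x y : α} :
    SameBlock (Finpartition.ofSetoid (Setoid.ker f)).parts x y ↔ f x = f y := by
  rw [SameBlock, ← Finpartition.mem_part_iff_exists, Finpartition.mem_part_ofSetoid_iff_rel,
    Setoid.ker_def, eq_comm]

end SetPartition

namespace Fin

variable {n : ℕ}

theorem val_sub_cases (a b : Fin n) :
    (b.val ≤ a.val ∧ (a - b).val = a.val - b.val) ∨
      (a.val < b.val ∧ (a - b).val = n + a.val - b.val) := by
  rcases le_or_gt b a with h | h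
  · exact .inl ⟨h, coe_sub_iff_le.2 h⟩
  · exact .inr ⟨h, coe_sub_iff_lt.2 h⟩

theorem val_finRotate_cases (i : Fin n) :
    (i.val + 1 < n ∧ (finRotate n i).val = i.val + 1) ∨
      (i.val + 1 = n ∧ (finRotate n i).val = 0) := by
  obtain _ | n := n
  · exact i.elim0
  rw [coe_finRotate]
  split_ifs with h
  · exact .inr ⟨by simp [h], rfl⟩
  · exact .inl ⟨by have := val_lt_last h; omega, rfl⟩

end Fin

section Cyclic

variable {n : ℕ}

def IsCyclicIntervalBlock (B : Finset (Fin n)) : Prop :=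
  IsIntervalBlock B ∨ ∃ C : Finset (Fin n), IsIntervalBlock C ∧ B = Cᶜ

theorem isCyclicIntervalPartition_iff {P : Finset (Finset (Fin n))} :
    IsCyclicIntervalPartition P ↔ IsSetPartition P ∧ ∀ B ∈ P, IsCyclicIntervalBlock B := by
  simp only [IsCyclicIntervalPartition, IsSetPartition, IsCyclicIntervalBlock, and_assoc]

theorem IsCyclicIntervalPartition.isSetPartition {P : Finset (Finset (Fin n))}
    (hP : IsCyclicIntervalPartition P) : IsSetPartition P :=
  (isCyclicIntervalPartition_iff.1 hP).1

def arcEndingAt (b : Fin n) (L : ℕ) : Finset (Fin n) := {x | (b - x).val < L}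

@[simp]
theorem mem_arcEndingAt {b x : Fin n} {L : ℕ} : x ∈ arcEndingAt b L ↔ (b - x).val < L := by
  simp [arcEndingAt]

theorem IsCyclicIntervalBlock.exists_eq_arcEndingAt {B : Finset (Fin n)}
    (hB : IsCyclicIntervalBlock B) : ∃ b L, B = arcEndingAt b L := by
  rcases hB with ⟨i, j, rfl⟩ | ⟨_, ⟨i, j, rfl⟩, rfl⟩
  · refine ⟨j, j.val + 1 - i.val, ?_⟩
    ext x
    have := Fin.val_sub_cases j x
    simp only [mem_Icc, mem_arcEndingAt, Fin.le_def]
    omega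
  · rcases lt_or_ge j i with hji | hij
    · refine ⟨i, n, ?_⟩
      ext x
      simp only [mem_compl, mem_Icc, mem_arcEndingAt, Fin.le_def]
      omega
    · have hb := Fin.val_finRotate_cases ((finRotate n).symm i)
      rw [Equiv.apply_symm_apply] at hb
      refine ⟨(finRotate n).symm i, n - (j.val + 1 - i.val), ?_⟩
      ext x
      have := Fin.val_sub_cases ((finRotate n).symm i) x
      simp only [mem_compl, mem_Icc, mem_arcEndingAt, Fin.le_def]
      omega

theorem isCyclicIntervalBlock_arcEndingAt (b : Fin n) {L : ℕ} (hL : 0 < L) (hLn : L ≤ n) :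
    IsCyclicIntervalBlock (arcEndingAt b L) := by
  rcases le_or_gt L (b.val + 1) with hLb | hbL
  · refine .inl ⟨⟨b.val + 1 - L, by omega⟩, b, ?_⟩
    ext x
    have := Fin.val_sub_cases b x
    simp only [mem_Icc, mem_arcEndingAt, Fin.le_def]
    omega
  · refine .inr ⟨_, ⟨⟨b.val + 1, by omega⟩, ⟨b.val + n - L, by omega⟩, rfl⟩, ?_⟩
    ext x
    have := Fin.val_sub_cases b x
    simp only [mem_compl, mem_Icc, mem_arcEndingAt, Fin.le_def]
    omega

end Cyclic

section Cuts

variable {n : ℕ} {P Q : Finset (Finset (Fin n))} {S : Finset (Fin n)} {i x y : Fin n}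

open Classical in
noncomputable def cuts (P : Finset (Finset (Fin n))) : Finset (Fin n) :=
  {i | ¬ SameBlock P i (finRotate n i)}

theorem mem_cuts : i ∈ cuts P ↔ ¬ SameBlock P i (finRotate n i) := by
  simp [cuts]

/-- No point of `S` lies on the half-open arc `[x, y)` running upwards cyclically from `x`. -/
def ArcAvoids (S : Finset (Fin n)) (x y : Fin n) : Prop :=
  ∀ z ∈ S, (y - x).val ≤ (z - x).val

instance (S : Finset (Fin n)) (x y : Fin n) : Decidable (ArcAvoids S x y) :=
  inferInstanceAs (Decidable (∀ z ∈ S, _))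

theorem IsSetPartition.sameBlock_of_arcAvoids (hP : IsSetPartition P)
    (h : ArcAvoids (cuts P) x y) : SameBlock P x y := by
  obtain ⟨m, hm⟩ : ∃ m, (y - x).val = m := ⟨_, rfl⟩
  induction m generalizing x with
  | zero =>
    obtain rfl : x = y := Fin.ext (by have := Fin.val_sub_cases y x; omega)
    exact hP.sameBlock_refl x
  | succ m ih =>
    have hx : x ∉ cuts P := fun hx => by
      have := h x hx
      have := Fin.val_sub_cases x x
      omega
    refine hP.sameBlock_trans (not_not.1 (mem_cuts.not.1 hx)) (ih (fun z hz => ?_) ?_)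
    · have := h z hz
      have := Fin.val_finRotate_cases x
      have := Fin.val_sub_cases y x
      have := Fin.val_sub_cases z x
      have := Fin.val_sub_cases y (finRotate n x)
      have := Fin.val_sub_cases z (finRotate n x)
      omega
    · have := Fin.val_finRotate_cases x
      have := Fin.val_sub_cases y x
      have := Fin.val_sub_cases y (finRotate n x)
      omega

theorem IsSetPartition.card_cuts_ne_one (hP : IsSetPartition P) : (cuts P).card ≠ 1 := by
  intro h
  obtain ⟨i, hi⟩ := card_eq_one.1 h
  refine mem_cuts.1 (hi ▸ mem_singleton_self i) (SameBlock.symm (hP.sameBlock_of_arcAvoids ?_))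
  rw [hi]
  intro z hz
  rw [mem_singleton.1 hz]

theorem arcAvoids_cuts_of_mem_arcEndingAt {b : Fin n} {L : ℕ} (hB : arcEndingAt b L ∈ P)
    (hx : x ∈ arcEndingAt b L) (hxy : (b - y).val ≤ (b - x).val) :
    ArcAvoids (cuts P) x y := by
  intro z hz
  by_contra! hzy
  refine mem_cuts.1 hz ⟨_, hB, ?_, ?_⟩ <;> rw [mem_arcEndingAt] at hx ⊢
  · have := Fin.val_sub_cases b x
    have := Fin.val_sub_cases b y
    have := Fin.val_sub_cases y x
    have := Fin.val_sub_cases z x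
    have := Fin.val_sub_cases b z
    omega
  · have := Fin.val_sub_cases b x
    have := Fin.val_sub_cases b y
    have := Fin.val_sub_cases y x
    have := Fin.val_sub_cases z x
    have := Fin.val_finRotate_cases z
    have := Fin.val_sub_cases b (finRotate n z)
    omega

theorem IsCyclicIntervalPartition.sameBlock_iff (hP : IsCyclicIntervalPartition P) :
    SameBlock P x y ↔ ArcAvoids (cuts P) x y ∨ ArcAvoids (cuts P) y x := by
  refine ⟨fun ⟨B, hB, hx, hy⟩ => ?_, ?_⟩
  · obtain ⟨b, L, rfl⟩ :=
      ((isCyclicIntervalPartition_iff.1 hP).2 B hB).exists_eq_arcEndingAt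
    rcases le_total (b - y).val (b - x).val with h | h
    · exact .inl (arcAvoids_cuts_of_mem_arcEndingAt hB hx h)
    · exact .inr (arcAvoids_cuts_of_mem_arcEndingAt hB hy h)
  · rintro (h | h)
    · exact hP.isSetPartition.sameBlock_of_arcAvoids h
    · exact (hP.isSetPartition.sameBlock_of_arcAvoids h).symm

theorem IsCyclicIntervalPartition.eq_of_cuts_eq (hP : IsCyclicIntervalPartition P)
    (hQ : IsCyclicIntervalPartition Q) (h : cuts P = cuts Q) : P = Q :=
  hP.isSetPartition.eq_of_sameBlock_iff hQ.isSetPartition fun x y => by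
    rw [hP.sameBlock_iff, hQ.sameBlock_iff, h]

end Cuts

section OfCuts

variable {n : ℕ} {S : Finset (Fin n)} {B : Finset (Fin n)} {i j x : Fin n}

theorem arcAvoids_self (S : Finset (Fin n)) (x : Fin n) : ArcAvoids S x x := fun z _ => by
  have := Fin.val_sub_cases x x
  omega

theorem ArcAvoids.eq (hi : i ∈ S) (hj : j ∈ S) (hxi : ArcAvoids S x i) (hxj : ArcAvoids S x j) :
    i = j := by
  have := hxi j hj
  have := hxj i hi
  have := Fin.val_sub_cases i x
  have := Fin.val_sub_cases j x
  exact Fin.ext (by omega)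

theorem exists_arcAvoids (hS : S.Nonempty) (x : Fin n) : ∃ i ∈ S, ArcAvoids S x i :=
  exists_min_image S (fun z => (z - x).val) hS

theorem arcAvoids_finRotate_iff (hi : i ∈ S) (hx : x ∉ S) :
    ArcAvoids S (finRotate n x) i ↔ ArcAvoids S x i := by
  refine forall₂_congr fun z hz => ?_
  have := Fin.val_finRotate_cases x
  have := Fin.val_sub_cases i x
  have := Fin.val_sub_cases z x
  have := Fin.val_sub_cases i (finRotate n x)
  have := Fin.val_sub_cases z (finRotate n x)
  have := Fin.val_ne_of_ne (ne_of_mem_of_not_mem hi hx)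
  have := Fin.val_ne_of_ne (ne_of_mem_of_not_mem hz hx)
  omega

theorem exists_arcAvoids_iff_lt (hS : 2 ≤ S.card) (hi : i ∈ S) :
    ∃ L, 0 < L ∧ L ≤ n ∧ ∀ y, ArcAvoids S y i ↔ (i - y).val < L := by
  have hne : (S.erase i).Nonempty := by
    rw [← card_pos, card_erase_of_mem hi]
    omega
  obtain ⟨p, hp, hmin⟩ := exists_min_image (S.erase i) (fun p => (i - p).val) hne
  obtain ⟨hpi, hp⟩ := mem_erase.1 hp
  have hpi := Fin.val_ne_of_ne hpi
  have := Fin.val_sub_cases i p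
  refine ⟨(i - p).val, by omega, by omega, fun y => ⟨fun h => ?_, fun h z hz => ?_⟩⟩
  · have := h p hp
    have := Fin.val_sub_cases i y
    have := Fin.val_sub_cases p y
    omega
  · by_contra! hzy
    have hzi : z ≠ i := by rintro rfl; omega
    have := hmin z (mem_erase.2 ⟨hzi, hz⟩)
    have := Fin.val_ne_of_ne hzi
    have := Fin.val_sub_cases i y
    have := Fin.val_sub_cases z y
    have := Fin.val_sub_cases i z
    omega

/-- The singleton of the first point of `S` reached walking upwards cyclically from `x`,
or `∅` when `S = ∅`. -/
def nextCut (S : Finset (Fin n)) (x : Fin n) : Finset (Fin n) :=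
  {z ∈ S | ArcAvoids S x z}

theorem nextCut_eq_singleton (hi : i ∈ S) (hxi : ArcAvoids S x i) : nextCut S x = {i} := by
  ext z
  simp only [nextCut, mem_filter, mem_singleton]
  exact ⟨fun ⟨hz, hxz⟩ => hxz.eq hz hi hxi, fun h => h ▸ ⟨hi, hxi⟩⟩

theorem nextCut_finRotate (hx : x ∉ S) : nextCut S (finRotate n x) = nextCut S x :=
  filter_congr fun _ hz => arcAvoids_finRotate_iff hz hx

open Classical in
noncomputable def ofCuts (S : Finset (Fin n)) : Finset (Finset (Fin n)) :=
  (Finpartition.ofSetoid (Setoid.ker (nextCut S))).parts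

theorem sameBlock_ofCuts {y : Fin n} : SameBlock (ofCuts S) x y ↔ nextCut S x = nextCut S y := by
  classical
  exact sameBlock_ofSetoid_ker _

theorem cuts_ofCuts (hS : S.card ≠ 1) : cuts (ofCuts S) = S := by
  ext i
  rw [mem_cuts, sameBlock_ofCuts]
  by_cases hi : i ∈ S
  · refine iff_of_true (fun h => hS (card_eq_one.2 ⟨i, ?_⟩)) hi
    have hlast : i ∈ nextCut S (finRotate n i) := by
      rw [← h, nextCut_eq_singleton hi (arcAvoids_self S i)]
      exact mem_singleton_self i
    refine eq_singleton_iff_unique_mem.2 ⟨hi, fun z hz => Fin.ext ?_⟩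
    have := (mem_filter.1 hlast).2 z hz
    have := Fin.val_finRotate_cases i
    have := Fin.val_sub_cases i (finRotate n i)
    have := Fin.val_sub_cases z (finRotate n i)
    omega
  · exact iff_of_false (not_not.2 (nextCut_finRotate hi).symm) hi

theorem exists_eq_arcEndingAt_of_mem_ofCuts (hS : S.card ≠ 1) (hB : B ∈ ofCuts S) :
    ∃ b L, 0 < L ∧ L ≤ n ∧ B = arcEndingAt b L := by
  classical
  obtain ⟨x, hx⟩ := (Finpartition.ofSetoid _).nonempty_of_mem_parts hB
  have hmem : ∀ y, y ∈ B ↔ nextCut S x = nextCut S y := fun y => by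
    rw [← (Finpartition.ofSetoid _).part_eq_of_mem hB hx, Finpartition.mem_part_ofSetoid_iff_rel,
      Setoid.ker_def]
  rcases S.eq_empty_or_nonempty with rfl | hne
  · refine ⟨x, n, x.pos, le_rfl, ext fun y => ?_⟩
    simp [hmem, nextCut]
  · obtain ⟨i, hi, hxi⟩ := exists_arcAvoids hne x
    have hS2 : 2 ≤ S.card := by have := card_pos.2 hne; omega
    obtain ⟨L, hL, hLn, hiff⟩ := exists_arcAvoids_iff_lt hS2 hi
    refine ⟨i, L, hL, hLn, ext fun y => ?_⟩
    rw [hmem, mem_arcEndingAt, ← hiff, nextCut_eq_singleton hi hxi]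
    exact ⟨fun h => (mem_filter.1 (h ▸ mem_singleton_self i)).2,
      fun h => (nextCut_eq_singleton hi h).symm⟩

theorem isCyclicIntervalPartition_ofCuts (hS : S.card ≠ 1) :
    IsCyclicIntervalPartition (ofCuts S) := by
  classical
  refine isCyclicIntervalPartition_iff.2 ⟨Finpartition.isSetPartition _, fun B hB => ?_⟩
  obtain ⟨b, L, hL, hLn, rfl⟩ := exists_eq_arcEndingAt_of_mem_ofCuts hS hB
  exact isCyclicIntervalBlock_arcEndingAt b hL hLn

end OfCuts

noncomputable def cutsEquiv (n : ℕ) :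
    {P : Finset (Finset (Fin n)) // IsCyclicIntervalPartition P} ≃
      {S : Finset (Fin n) // S.card ≠ 1} where
  toFun P := ⟨cuts P.1, P.2.isSetPartition.card_cuts_ne_one⟩
  invFun S := ⟨ofCuts S.1, isCyclicIntervalPartition_ofCuts S.2⟩
  left_inv P := Subtype.ext <|
    (isCyclicIntervalPartition_ofCuts (P.2.isSetPartition.card_cuts_ne_one)).eq_of_cuts_eq P.2
      (cuts_ofCuts P.2.isSetPartition.card_cuts_ne_one)
  right_inv S := Subtype.ext (cuts_ofCuts S.2)

theorem Fintype.card_finset_card_ne_one (α : Type*) [Fintype α] :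
    Fintype.card {s : Finset α // s.card ≠ 1} = 2 ^ Fintype.card α - Fintype.card α := by
  rw [Fintype.card_subtype_compl, Fintype.card_finset_len, Fintype.card_finset,
    Nat.choose_one_right]

/-- The number of cyclic-interval partitions of `{1,…,n}` is `2^n - n`. -/
theorem card_cyclicIntervalPartitions (n : ℕ) :
    Nat.card {P : Finset (Finset (Fin n)) // IsCyclicIntervalPartition P} = 2 ^ n - n := by
  rw [Nat.card_congr (cutsEquiv n), Nat.card_eq_fintype_card, Fintype.card_finset_card_ne_one,
    Fintype.card_fin]
end

section
/- Let A be a d×d complex matrix with block decomposition A = [[α, a₁*],[a₂, Ā]], and let G_A(z) = ⟨(zI-A)⁻¹e₁,e₁⟩. Then Tr((zI-Ā)⁻¹) = Tr((zI-A)⁻¹) + d/dz log(G_A(z)) in any open set of z where zI-A and zI-Ā are invertible, G_A(z) ≠ 0, and both sides are defined. -/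
open Matrix

/-- Derivative of the characteristic determinant at a point where the resolvent exists. -/
lemma hasDerivAt_det_resolvent {m : Type*} [Fintype m] [DecidableEq m]
    (A : Matrix m m ℂ) (z : ℂ) (h : IsUnit (z • (1 : Matrix m m ℂ) - A)) :
    HasDerivAt (fun w => (w • (1 : Matrix m m ℂ) - A).det)
      ((z • (1 : Matrix m m ℂ) - A).det * Matrix.trace (z • (1 : Matrix m m ℂ) - A)⁻¹) z := by
  set M : Matrix m m ℂ := z • (1 : Matrix m m ℂ) - A with hM
  have hdet : IsUnit M.det := (Matrix.isUnit_iff_isUnit_det M).mp h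
  have hMM : M * M⁻¹ = 1 := Matrix.mul_nonsing_inv M hdet
  set E : Polynomial ℂ := (Matrix.det (1 + (Polynomial.X : Polynomial ℂ) • M⁻¹.map Polynomial.C)).divX.divX with hE
  have key : ∀ w : ℂ, (w • (1 : Matrix m m ℂ) - A).det
      = M.det * (1 + Matrix.trace M⁻¹ * (w - z) + E.eval (w - z) * (w - z) ^ 2) := by
    intro w
    have h1 : w • (1 : Matrix m m ℂ) - A = M * (1 + (w - z) • M⁻¹) := by
      rw [mul_add, mul_one, Matrix.mul_smul, hMM, hM]
      rw [sub_smul]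
      abel
    rw [h1, Matrix.det_mul, Matrix.det_one_add_smul]
  have hsub : HasDerivAt (fun w : ℂ => w - z) 1 z := (hasDerivAt_id z).sub_const z
  set F : Polynomial ℂ := E.comp (Polynomial.X - Polynomial.C z) with hF
  have hEe : HasDerivAt (fun w : ℂ => E.eval (w - z)) (F.derivative.eval z) z := by
    simpa [hF, Polynomial.eval_comp] using F.hasDerivAt z
  have hsq : HasDerivAt (fun w : ℂ => (w - z) ^ 2) ((2 : ℕ) * (z - z) ^ 1 * 1) z := hsub.pow 2
  have hfull : HasDerivAt
      (fun w : ℂ => M.det * (1 + Matrix.trace M⁻¹ * (w - z) + E.eval (w - z) * (w - z) ^ 2))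
      (M.det * ((Matrix.trace M⁻¹ * 1) + (F.derivative.eval z * (z - z) ^ 2
        + E.eval (z - z) * ((2 : ℕ) * (z - z) ^ 1 * 1)))) z := by
    exact (((hasDerivAt_const z (1 : ℂ)).add ((hasDerivAt_const z (Matrix.trace M⁻¹)).mul hsub)).add
      (hEe.mul hsq)).const_mul M.det |>.congr_deriv (by ring)
  have : HasDerivAt (fun w : ℂ => (w • (1 : Matrix m m ℂ) - A).det)
      (M.det * ((Matrix.trace M⁻¹ * 1) + (F.derivative.eval z * (z - z) ^ 2
        + E.eval (z - z) * ((2 : ℕ) * (z - z) ^ 1 * 1)))) z := by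
    exact hfull.congr_of_eventuallyEq (Filter.Eventually.of_forall fun w => key w)
  convert this using 1
  simp


/-- Relation between the trace of the resolvent of a matrix and of its lower-right
corner: with `A = [[α, a₁*],[a₂, Ā]]` and `G_A(w) = ⟨(wI-A)⁻¹e₁,e₁⟩`, on an open set
where `wI - A`, `wI - Ā` are invertible and `G_A(w) ≠ 0`, one has
`Tr((zI-Ā)⁻¹) = Tr((zI-A)⁻¹) + (d/dz) log G_A(z) = Tr((zI-A)⁻¹) + G_A'(z)/G_A(z)`. -/
theorem trace_resolvent_corner
    {n : ℕ} (hn : 1 ≤ n) (α : ℂ) (a₁ a₂ : Fin n → ℂ)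
    (Abar : Matrix (Fin n) (Fin n) ℂ)
    (A : Matrix (Unit ⊕ Fin n) (Unit ⊕ Fin n) ℂ)
    (hA : A = Matrix.fromBlocks (Matrix.of fun _ _ => α)
      (Matrix.of fun (_ : Unit) j => a₁ j)
      (Matrix.of fun i (_ : Unit) => a₂ i) Abar)
    (G : ℂ → ℂ)
    (hG : G = fun w =>
      (w • (1 : Matrix (Unit ⊕ Fin n) (Unit ⊕ Fin n) ℂ) - A)⁻¹ (Sum.inl ()) (Sum.inl ()))
    (U : Set ℂ) (hU : IsOpen U)
    (h1 : ∀ w ∈ U, IsUnit (w • (1 : Matrix (Unit ⊕ Fin n) (Unit ⊕ Fin n) ℂ) - A))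
    (h2 : ∀ w ∈ U, IsUnit (w • (1 : Matrix (Fin n) (Fin n) ℂ) - Abar))
    (h3 : ∀ w ∈ U, G w ≠ 0)
    (z : ℂ) (hz : z ∈ U) :
    Matrix.trace ((z • (1 : Matrix (Fin n) (Fin n) ℂ) - Abar)⁻¹)
      = Matrix.trace ((z • (1 : Matrix (Unit ⊕ Fin n) (Unit ⊕ Fin n) ℂ) - A)⁻¹)
        + deriv G z / G z := by
  classical
  set q : ℂ → ℂ := fun w => (w • (1 : Matrix (Unit ⊕ Fin n) (Unit ⊕ Fin n) ℂ) - A).det with hq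
  set p : ℂ → ℂ := fun w => (w • (1 : Matrix (Fin n) (Fin n) ℂ) - Abar).det with hp
  -- G = q⁻¹ * p
  have hGpq : G = fun w => (q w)⁻¹ * p w := by
    funext w
    simp only [hG]
    rw [Matrix.inv_def, Matrix.smul_apply, Matrix.adjugate_apply, Ring.inverse_eq_inv']
    simp only [smul_eq_mul]
    congr 1
    have hupd : (w • (1 : Matrix (Unit ⊕ Fin n) (Unit ⊕ Fin n) ℂ) - A).updateRow (Sum.inl ())
        (Pi.single (Sum.inl ()) 1)
        = Matrix.fromBlocks (1 : Matrix Unit Unit ℂ) 0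
            (Matrix.of fun i (_ : Unit) => -a₂ i)
            (w • (1 : Matrix (Fin n) (Fin n) ℂ) - Abar) := by
      subst hA
      ext i j
      rcases i with i | i <;> rcases j with j | j <;>
        simp [Matrix.updateRow_apply, Matrix.one_apply, Pi.single_apply, Sum.inl.injEq]
    rw [hupd, Matrix.det_fromBlocks_zero₁₂, Matrix.det_one, one_mul]
  have hqz : q z ≠ 0 := by
    have := (Matrix.isUnit_iff_isUnit_det _).mp (h1 z hz)
    exact IsUnit.ne_zero (by simpa using this)
  have hpz : p z ≠ 0 := by
    have hGz := h3 z hz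
    rw [hGpq] at hGz
    intro h0
    apply hGz
    simp [h0]
  set Tq : ℂ := Matrix.trace ((z • (1 : Matrix (Unit ⊕ Fin n) (Unit ⊕ Fin n) ℂ) - A)⁻¹) with hTq
  set Tp : ℂ := Matrix.trace ((z • (1 : Matrix (Fin n) (Fin n) ℂ) - Abar)⁻¹) with hTp
  have hq' : HasDerivAt q (q z * Tq) z := hasDerivAt_det_resolvent A z (h1 z hz)
  have hp' : HasDerivAt p (p z * Tp) z := hasDerivAt_det_resolvent Abar z (h2 z hz)
  have hG' : HasDerivAt G (-(q z * Tq) / (q z) ^ 2 * p z + (q z)⁻¹ * (p z * Tp)) z := by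
    rw [hGpq]
    exact (hq'.inv hqz).mul hp'
  rw [hG'.deriv, hGpq]
  simp only
  field_simp
  ring
end

section
/- For the star product Γ₁ ⊛ Γ₂ of two finite rooted graphs (Γ₁,o₁) and (Γ₂,o₂), the reciprocal Green functions satisfy F_{Γ₁⊛Γ₂}(z) = F_{Γ₁}(z) + F_{Γ₂}(z) - z for all z in the common domain where the Green functions are defined and nonzero. -/
open Matrix
open Classical

/-- The adjacency matrix of a finite simple graph, with complex entries. -/
noncomputable def adjMat {V : Type*} [Fintype V] (G : SimpleGraph V) : Matrix V V ℂ :=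
  Matrix.of fun i j => if G.Adj i j then 1 else 0

/-- The star product of two rooted graphs `(Γ₁,o₁)` and `(Γ₂,o₂)`: the two graphs are
glued at their roots.  Vertices: those of `Γ₁` together with the non-root vertices of
`Γ₂`; the root of the star product is `o₁` (i.e. `Sum.inl o₁`). -/
def starProd {V₁ V₂ : Type*} (G₁ : SimpleGraph V₁) (o₁ : V₁)
    (G₂ : SimpleGraph V₂) (o₂ : V₂) : SimpleGraph (V₁ ⊕ {v : V₂ // v ≠ o₂}) where
  Adj u v :=
    match u, v with
    | Sum.inl a, Sum.inl b => G₁.Adj a b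
    | Sum.inl a, Sum.inr b => a = o₁ ∧ G₂.Adj o₂ b.val
    | Sum.inr a, Sum.inl b => b = o₁ ∧ G₂.Adj o₂ a.val
    | Sum.inr a, Sum.inr b => G₂.Adj a.val b.val
  symm := ⟨by
    rintro (a | a) (b | b) h
    · exact G₁.adj_symm h
    · exact h
    · exact h
    · exact G₂.adj_symm h⟩
  loopless := ⟨by
    rintro (a | a) h
    · exact G₁.irrefl h
    · exact G₂.irrefl h⟩

/-!
Let `w` be the column of `(z - A)⁻¹` at the root of `Γ₁ ⊛ Γ₂` and `g = w(o₁)`.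
On the copy of `Γ₁`, `w` solves `(z - A₁) w = t δ_{o₁}` with `t = 1 + ∑_{b ∼ o₂} w(b)`;
on the copy of `Γ₂` (root value `g`), it solves `(z - A₂) w = s δ_{o₂}` with
`s = z g - ∑_{b ∼ o₂} w(b)`. Hence `g = t g₁ = s g₂` for the Green functions `gᵢ` of the
factors, and `s + t = 1 + z g` rearranges to `1/g = 1/g₁ + 1/g₂ - z`.
-/

lemma Matrix.apply_eq_inv_mul_of_mulVec_eq_single {n R : Type*} [Fintype n] [DecidableEq n]
    [CommRing R] {M : Matrix n n R} (hM : IsUnit M) {x : n → R} {i : n} {c : R}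
    (h : M *ᵥ x = Pi.single i c) (j : n) : x j = M⁻¹ j i * c := by
  have hx : x = M⁻¹ *ᵥ (M *ᵥ x) := by
    rw [mulVec_mulVec, nonsing_inv_mul _ ((isUnit_iff_isUnit_det M).mp hM), one_mulVec]
  rw [hx, h, mulVec_single]
  simp [mul_comm]

lemma inv_eq_inv_add_inv_sub_of_mul_eq {K : Type*} [Field K] {g g₁ g₂ s t z : K}
    (h₁ : g = g₁ * t) (h₂ : g = g₂ * s) (hst : s + t = 1 + z * g) (hg : g ≠ 0) :
    g⁻¹ = g₁⁻¹ + g₂⁻¹ - z := by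
  have hg₁ : g₁ ≠ 0 := left_ne_zero_of_mul (h₁ ▸ hg)
  have hg₂ : g₂ ≠ 0 := left_ne_zero_of_mul (h₂ ▸ hg)
  field_simp
  linear_combination -g₁ * g₂ * hst - g₂ * h₁ - g₁ * h₂

lemma adjMat_mulVec_apply {V : Type*} [Fintype V] (G : SimpleGraph V) (x : V → ℂ) (v : V) :
    (adjMat G *ᵥ x) v = ∑ u, if G.Adj v u then x u else 0 := by
  simp [adjMat, mulVec, dotProduct]

namespace starProd

variable {V₁ V₂ : Type*} {G₁ : SimpleGraph V₁} {o₁ : V₁} {G₂ : SimpleGraph V₂} {o₂ : V₂}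

def restrictRight [DecidableEq V₂] {α : Type*} (o₁ : V₁) (o₂ : V₂)
    (w : V₁ ⊕ {v : V₂ // v ≠ o₂} → α) (v : V₂) : α :=
  if h : v = o₂ then w (Sum.inl o₁) else w (Sum.inr ⟨v, h⟩)

@[simp]
lemma restrictRight_root [DecidableEq V₂] {α : Type*} (w : V₁ ⊕ {v : V₂ // v ≠ o₂} → α) :
    restrictRight o₁ o₂ w o₂ = w (Sum.inl o₁) :=
  dif_pos rfl

@[simp]
lemma restrictRight_coe [DecidableEq V₂] {α : Type*} (w : V₁ ⊕ {v : V₂ // v ≠ o₂} → α)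
    (b : {v : V₂ // v ≠ o₂}) :
    restrictRight o₁ o₂ w b = w (Sum.inr b) :=
  dif_neg b.2

@[simp]
lemma adj_inl_inl {a b : V₁} : (starProd G₁ o₁ G₂ o₂).Adj (Sum.inl a) (Sum.inl b) ↔ G₁.Adj a b :=
  Iff.rfl

@[simp]
lemma adj_inl_inr {a : V₁} {b : {v : V₂ // v ≠ o₂}} :
    (starProd G₁ o₁ G₂ o₂).Adj (Sum.inl a) (Sum.inr b) ↔ a = o₁ ∧ G₂.Adj o₂ b :=
  Iff.rfl

@[simp]
lemma adj_inr_inl {a : V₁} {b : {v : V₂ // v ≠ o₂}} :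
    (starProd G₁ o₁ G₂ o₂).Adj (Sum.inr b) (Sum.inl a) ↔ a = o₁ ∧ G₂.Adj o₂ b :=
  Iff.rfl

@[simp]
lemma adj_inr_inr {a b : {v : V₂ // v ≠ o₂}} :
    (starProd G₁ o₁ G₂ o₂).Adj (Sum.inr a) (Sum.inr b) ↔ G₂.Adj a b :=
  Iff.rfl

variable [Fintype V₁] [Fintype V₂] [DecidableEq V₁] [DecidableEq V₂]

lemma adjMat_mulVec_inl (w : V₁ ⊕ {v : V₂ // v ≠ o₂} → ℂ) (a : V₁) :
    (adjMat (starProd G₁ o₁ G₂ o₂) *ᵥ w) (Sum.inl a) =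
      (adjMat G₁ *ᵥ (w ∘ Sum.inl)) a +
        (Pi.single o₁ ((adjMat G₂ *ᵥ restrictRight o₁ o₂ w) o₂) : V₁ → ℂ) a := by
  by_cases ha : a = o₁ <;>
    simp [ha, adjMat_mulVec_apply, Fintype.sum_sum_type, Fintype.sum_eq_add_sum_subtype_ne _ o₂]

lemma adjMat_mulVec_inr (w : V₁ ⊕ {v : V₂ // v ≠ o₂} → ℂ) (b : {v : V₂ // v ≠ o₂}) :
    (adjMat (starProd G₁ o₁ G₂ o₂) *ᵥ w) (Sum.inr b) =
      (adjMat G₂ *ᵥ restrictRight o₁ o₂ w) b := by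
  simp [adjMat_mulVec_apply, Fintype.sum_sum_type, Fintype.sum_eq_add_sum_subtype_ne _ o₂,
    ite_and, G₂.adj_comm]

lemma resolvent_mulVec_comp_inl {z : ℂ} {w : V₁ ⊕ {v : V₂ // v ≠ o₂} → ℂ}
    (hw : (z • 1 - adjMat (starProd G₁ o₁ G₂ o₂)) *ᵥ w = Pi.single (Sum.inl o₁) 1) :
    (z • 1 - adjMat G₁) *ᵥ (w ∘ Sum.inl) =
      Pi.single o₁ (1 + (adjMat G₂ *ᵥ restrictRight o₁ o₂ w) o₂) := by
  ext a
  have hwa := congrFun hw (Sum.inl a)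
  simp only [sub_mulVec, smul_mulVec, one_mulVec, Pi.sub_apply, Pi.smul_apply, smul_eq_mul,
    Function.comp_apply, adjMat_mulVec_inl] at hwa ⊢
  by_cases ha : a = o₁
  · subst ha
    simp only [Pi.single_eq_same] at hwa ⊢
    linear_combination hwa
  · simp only [Pi.single_eq_of_ne ha, Pi.single_eq_of_ne (Sum.inl_injective.ne ha)] at hwa ⊢
    linear_combination hwa

lemma resolvent_mulVec_restrictRight {z : ℂ} {w : V₁ ⊕ {v : V₂ // v ≠ o₂} → ℂ}
    (hw : (z • 1 - adjMat (starProd G₁ o₁ G₂ o₂)) *ᵥ w = Pi.single (Sum.inl o₁) 1) :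
    (z • 1 - adjMat G₂) *ᵥ restrictRight o₁ o₂ w =
      Pi.single o₂ (z * w (Sum.inl o₁) - (adjMat G₂ *ᵥ restrictRight o₁ o₂ w) o₂) := by
  ext b
  by_cases hb : b = o₂
  · subst hb
    simp [sub_mulVec, smul_mulVec]
  · lift b to {v : V₂ // v ≠ o₂} using hb
    simpa [sub_mulVec, smul_mulVec, adjMat_mulVec_inr, b.2] using congrFun hw (Sum.inr b)

end starProd

theorem F_starProd_general {V₁ V₂ : Type*} [Fintype V₁] [Fintype V₂]
    [DecidableEq V₁] [DecidableEq V₂]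
    (G₁ : SimpleGraph V₁) (o₁ : V₁) (G₂ : SimpleGraph V₂) (o₂ : V₂) (z : ℂ)
    (h1 : IsUnit (z • (1 : Matrix V₁ V₁ ℂ) - adjMat G₁))
    (h2 : IsUnit (z • (1 : Matrix V₂ V₂ ℂ) - adjMat G₂))
    (h3 : IsUnit (z • (1 : Matrix (V₁ ⊕ {v : V₂ // v ≠ o₂}) (V₁ ⊕ {v : V₂ // v ≠ o₂}) ℂ)
      - adjMat (starProd G₁ o₁ G₂ o₂)))
    (hg3 : (z • (1 : Matrix (V₁ ⊕ {v : V₂ // v ≠ o₂}) (V₁ ⊕ {v : V₂ // v ≠ o₂}) ℂ)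
      - adjMat (starProd G₁ o₁ G₂ o₂))⁻¹ (Sum.inl o₁) (Sum.inl o₁) ≠ 0) :
    ((z • (1 : Matrix (V₁ ⊕ {v : V₂ // v ≠ o₂}) (V₁ ⊕ {v : V₂ // v ≠ o₂}) ℂ)
        - adjMat (starProd G₁ o₁ G₂ o₂))⁻¹ (Sum.inl o₁) (Sum.inl o₁))⁻¹
      = ((z • (1 : Matrix V₁ V₁ ℂ) - adjMat G₁)⁻¹ o₁ o₁)⁻¹
        + ((z • (1 : Matrix V₂ V₂ ℂ) - adjMat G₂)⁻¹ o₂ o₂)⁻¹ - z := by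
  set R := z • (1 : Matrix (V₁ ⊕ {v : V₂ // v ≠ o₂}) (V₁ ⊕ {v : V₂ // v ≠ o₂}) ℂ)
    - adjMat (starProd G₁ o₁ G₂ o₂)
  set w := R⁻¹ *ᵥ Pi.single (Sum.inl o₁) 1 with hw_def
  have hw : R *ᵥ w = Pi.single (Sum.inl o₁) 1 := by
    rw [hw_def, mulVec_mulVec, mul_nonsing_inv _ ((isUnit_iff_isUnit_det R).mp h3), one_mulVec]
  have hg : R⁻¹ (Sum.inl o₁) (Sum.inl o₁) = w (Sum.inl o₁) := by simp [w]
  rw [hg] at hg3 ⊢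
  set S := (adjMat G₂ *ᵥ starProd.restrictRight o₁ o₂ w) o₂
  refine inv_eq_inv_add_inv_sub_of_mul_eq (t := 1 + S) (s := z * w (Sum.inl o₁) - S)
    ?_ ?_ (by ring) hg3
  · exact apply_eq_inv_mul_of_mulVec_eq_single h1 (starProd.resolvent_mulVec_comp_inl hw) o₁
  · simpa using apply_eq_inv_mul_of_mulVec_eq_single h2
      (starProd.resolvent_mulVec_restrictRight hw) o₂

/-- The Boolean linearization formula for the Green functions of a star product of
rooted graphs: `F_{Γ₁ ⊛ Γ₂}(z) = F_{Γ₁}(z) + F_{Γ₂}(z) - z`, on the common domain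
where the Green functions `G_Γ(z) = ⟨(zI - A_Γ)⁻¹ δ_o, δ_o⟩` are defined
(the resolvents exist) and nonzero; `F_Γ = 1/G_Γ`. -/
theorem F_starProd {V₁ V₂ : Type*} [Fintype V₁] [Fintype V₂]
    [DecidableEq V₁] [DecidableEq V₂]
    (G₁ : SimpleGraph V₁) (o₁ : V₁) (G₂ : SimpleGraph V₂) (o₂ : V₂) (z : ℂ)
    (h1 : IsUnit (z • (1 : Matrix V₁ V₁ ℂ) - adjMat G₁))
    (h2 : IsUnit (z • (1 : Matrix V₂ V₂ ℂ) - adjMat G₂))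
    (h3 : IsUnit (z • (1 : Matrix (V₁ ⊕ {v : V₂ // v ≠ o₂}) (V₁ ⊕ {v : V₂ // v ≠ o₂}) ℂ)
      - adjMat (starProd G₁ o₁ G₂ o₂)))
    (hg1 : (z • (1 : Matrix V₁ V₁ ℂ) - adjMat G₁)⁻¹ o₁ o₁ ≠ 0)
    (hg2 : (z • (1 : Matrix V₂ V₂ ℂ) - adjMat G₂)⁻¹ o₂ o₂ ≠ 0)
    (hg3 : (z • (1 : Matrix (V₁ ⊕ {v : V₂ // v ≠ o₂}) (V₁ ⊕ {v : V₂ // v ≠ o₂}) ℂ)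
      - adjMat (starProd G₁ o₁ G₂ o₂))⁻¹ (Sum.inl o₁) (Sum.inl o₁) ≠ 0) :
    ((z • (1 : Matrix (V₁ ⊕ {v : V₂ // v ≠ o₂}) (V₁ ⊕ {v : V₂ // v ≠ o₂}) ℂ)
        - adjMat (starProd G₁ o₁ G₂ o₂))⁻¹ (Sum.inl o₁) (Sum.inl o₁))⁻¹
      = ((z • (1 : Matrix V₁ V₁ ℂ) - adjMat G₁)⁻¹ o₁ o₁)⁻¹
        + ((z • (1 : Matrix V₂ V₂ ℂ) - adjMat G₂)⁻¹ o₂ o₂)⁻¹ - z :=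
  F_starProd_general G₁ o₁ G₂ o₂ z h1 h2 h3 hg3
end

section
/- For finite rooted graphs (Γ₁,o₁) and (Γ₂,o₂) with characteristic polynomials φ, one has Schwenk's formula for the star product: φ_{Γ₁⊛Γ₂}(x) = φ_{Γ₁}(x)·φ_{Γ₂∖o₂}(x) + φ_{Γ₁∖o₁}(x)·φ_{Γ₂}(x) - x·φ_{Γ₁∖o₁}(x)·φ_{Γ₂∖o₂}(x). -/
open Matrix
open Classical

/-- The adjacency matrix of the graph obtained by deleting the root `o`. -/
noncomputable def adjMatDelete {V : Type*} [Fintype V] (G : SimpleGraph V) (o : V) :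
    Matrix {v : V // v ≠ o} {v : V // v ≠ o} ℂ :=
  (adjMat G).submatrix Subtype.val Subtype.val

/-!
Let `M = x • 1 - A(Γ₁ ⊛ Γ₂)` and split the root row of `M` into its part on `Γ₁` and its part
on `Γ₂ ∖ o₂`; by multilinearity `det M` is the sum of the two resulting determinants. In the
first, the root row no longer meets `Γ₂ ∖ o₂`, so the matrix is block triangular with diagonal
blocks `x • 1 - A(Γ₁)` and `x • 1 - A(Γ₂ ∖ o₂)`. In the second, the root row no longer meets
`Γ₁`; regarding the root as a vertex of `Γ₂` instead, the matrix becomes block triangular with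
diagonal blocks `x • 1 - A(Γ₁ ∖ o₁)` and `x • 1 - A(Γ₂)` with its root diagonal entry erased,
and erasing that entry lowers the determinant by `x · φ_{Γ₂∖o₂}(x)`.
-/

namespace Matrix

section DeleteIndex

variable {R n : Type*}

def deleteIndex (A : Matrix n n R) (o : n) : Matrix {i // i ≠ o} {i // i ≠ o} R :=
  A.submatrix (↑) (↑)

variable [CommRing R] [DecidableEq n]

theorem deleteIndex_smul_one_sub (A : Matrix n n R) (o : n) (x : R) :
    (x • (1 : Matrix n n R) - A).deleteIndex o = x • 1 - A.deleteIndex o := by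
  ext i j
  simp [deleteIndex, one_apply, Subtype.ext_iff]

variable [Fintype n]

theorem det_updateRow_single (B : Matrix n n R) (o : n) (c : R) :
    (B.updateRow o (Pi.single o c)).det = c * (B.deleteIndex o).det := by
  rw [twoBlockTriangular_det' _ (· = o)]
  · congr 1
    · simp [det_unique, toSquareBlockProp, (default : {i // i = o}).2]
    · congr 1
      ext i j
      simp [toSquareBlockProp, deleteIndex, updateRow_ne i.2]
  · rintro i rfl j hj
    simp [hj]

theorem det_eq_mul_det_deleteIndex_add_det_updateRow (B : Matrix n n R) (o : n) :
    B.det = B o o * (B.deleteIndex o).det + (B.updateRow o (Function.update (B o) o 0)).det := by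
  have hrow : B o = Pi.single o (B o o) + Function.update (B o) o 0 := by
    ext j
    by_cases hj : j = o <;> simp [hj]
  conv_lhs => rw [← updateRow_eq_self B o, hrow, det_updateRow_add, det_updateRow_single]

end DeleteIndex

end Matrix

def Equiv.moveRoot {V₁ V₂ : Type*} [DecidableEq V₁] [DecidableEq V₂] (o₁ : V₁) (o₂ : V₂) :
    {v // v ≠ o₁} ⊕ V₂ ≃ V₁ ⊕ {v // v ≠ o₂} where
  toFun
    | Sum.inl a => Sum.inl a
    | Sum.inr v => if h : v = o₂ then Sum.inl o₁ else Sum.inr ⟨v, h⟩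
  invFun
    | Sum.inl a => if h : a = o₁ then Sum.inr o₂ else Sum.inl ⟨a, h⟩
    | Sum.inr w => Sum.inr w
  left_inv := by
    rintro (a | v)
    · simp [a.2]
    · by_cases h : v = o₂ <;> simp [h]
  right_inv := by
    rintro (a | w)
    · by_cases h : a = o₁ <;> simp [h]
    · simp [w.2]

namespace Matrix

/-- Matrix version of `starProd`: the root is shared and its diagonal entry is taken from `A`
(`B o₂ o₂` is discarded). -/
def glueRoots {R V₁ V₂ : Type*} [Zero R] [DecidableEq V₁] (A : Matrix V₁ V₁ R) (o₁ : V₁)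
    (B : Matrix V₂ V₂ R) (o₂ : V₂) : Matrix (V₁ ⊕ {v // v ≠ o₂}) (V₁ ⊕ {v // v ≠ o₂}) R :=
  fromBlocks A (of fun a j => if a = o₁ then B o₂ j else 0)
    (of fun j a => if a = o₁ then B j o₂ else 0) (B.deleteIndex o₂)

section GlueRoots

variable {R V₁ V₂ : Type*} [CommRing R] [DecidableEq V₁]
  (A : Matrix V₁ V₁ R) (o₁ : V₁) (B : Matrix V₂ V₂ R) (o₂ : V₂)

theorem glueRoots_root_row : glueRoots A o₁ B o₂ (Sum.inl o₁)
    = Sum.elim (A o₁) 0 + Sum.elim (0 : V₁ → R) (fun j : {v // v ≠ o₂} => B o₂ j) := by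
  ext (b | j) <;> simp [glueRoots]

variable [DecidableEq V₂]

theorem glueRoots_smul_one_sub (x : R) :
    glueRoots (x • 1 - A) o₁ (x • 1 - B) o₂ = x • 1 - glueRoots A o₁ B o₂ := by
  ext (a | ⟨j, hj⟩) (b | ⟨k, hk⟩)
  · simp [glueRoots, one_apply]
  · by_cases ha : a = o₁ <;> simp [glueRoots, one_apply, ha, hk.symm]
  · by_cases hb : b = o₁ <;> simp [glueRoots, one_apply, hb, hj]
  · simp [glueRoots, deleteIndex, one_apply]

variable [Fintype V₁] [Fintype V₂]

theorem det_glueRoots_updateRow_root_left :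
    ((glueRoots A o₁ B o₂).updateRow (Sum.inl o₁) (Sum.elim (A o₁) 0)).det
      = A.det * (B.deleteIndex o₂).det := by
  have h : (glueRoots A o₁ B o₂).updateRow (Sum.inl o₁) (Sum.elim (A o₁) 0)
      = fromBlocks A 0 (of fun (j : {v // v ≠ o₂}) a => if a = o₁ then B j o₂ else 0)
          (B.deleteIndex o₂) := by
    ext (a | j) (b | k)
    · by_cases ha : a = o₁ <;> simp [glueRoots, updateRow_apply, ha]
    · by_cases ha : a = o₁ <;> simp [glueRoots, updateRow_apply, ha]
    all_goals simp [glueRoots, updateRow_apply]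
  rw [h, det_fromBlocks_zero₁₂]

theorem det_glueRoots_updateRow_root_right :
    ((glueRoots A o₁ B o₂).updateRow (Sum.inl o₁)
        (Sum.elim (0 : V₁ → R) (fun j : {v // v ≠ o₂} => B o₂ j))).det
      = (A.deleteIndex o₁).det * (B.updateRow o₂ (Function.update (B o₂) o₂ 0)).det := by
  have h : ((glueRoots A o₁ B o₂).updateRow (Sum.inl o₁)
        (Sum.elim (0 : V₁ → R) (fun j : {v // v ≠ o₂} => B o₂ j))).submatrix
          (Equiv.moveRoot o₁ o₂) (Equiv.moveRoot o₁ o₂)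
      = fromBlocks (A.deleteIndex o₁) (of fun a v => if v = o₂ then A a o₁ else 0) 0
          (B.updateRow o₂ (Function.update (B o₂) o₂ 0)) := by
    ext (a | v) (b | w)
    · simp [glueRoots, deleteIndex, Equiv.moveRoot, updateRow_apply, a.2]
    · by_cases hw : w = o₂ <;>
        simp [glueRoots, deleteIndex, Equiv.moveRoot, updateRow_apply, a.2, hw]
    · by_cases hv : v = o₂ <;>
        simp [glueRoots, deleteIndex, Equiv.moveRoot, updateRow_apply, b.2, hv]
    · by_cases hv : v = o₂ <;> by_cases hw : w = o₂ <;>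
        simp [glueRoots, deleteIndex, Equiv.moveRoot, updateRow_apply, hv, hw]
  rw [← det_submatrix_equiv_self (Equiv.moveRoot o₁ o₂), h, det_fromBlocks_zero₂₁]

theorem det_glueRoots : (glueRoots A o₁ B o₂).det
    = A.det * (B.deleteIndex o₂).det
      + (A.deleteIndex o₁).det * (B.det - B o₂ o₂ * (B.deleteIndex o₂).det) := by
  rw [← updateRow_eq_self (glueRoots A o₁ B o₂) (Sum.inl o₁), glueRoots_root_row,
    det_updateRow_add, det_glueRoots_updateRow_root_left, det_glueRoots_updateRow_root_right,
    B.det_eq_mul_det_deleteIndex_add_det_updateRow o₂]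
  ring

end GlueRoots

end Matrix

theorem adjMatDelete_eq_deleteIndex {V : Type*} [Fintype V] (G : SimpleGraph V) (o : V) :
    adjMatDelete G o = (adjMat G).deleteIndex o :=
  rfl

theorem adjMat_starProd {V₁ V₂ : Type*} [Fintype V₁] [Fintype V₂] [DecidableEq V₁]
    [DecidableEq V₂] (G₁ : SimpleGraph V₁) (o₁ : V₁) (G₂ : SimpleGraph V₂) (o₂ : V₂) :
    adjMat (starProd G₁ o₁ G₂ o₂) = glueRoots (adjMat G₁) o₁ (adjMat G₂) o₂ := by
  ext (a | j) (b | k) <;>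
    simp only [glueRoots, adjMat, deleteIndex, of_apply, submatrix_apply,
      fromBlocks_apply₁₁, fromBlocks_apply₁₂, fromBlocks_apply₂₁, fromBlocks_apply₂₂] <;>
    split_ifs <;> simp_all [starProd, G₂.adj_comm]

/-- Schwenk's formula for the characteristic polynomial of a star product:
`φ_{Γ₁⊛Γ₂}(x) = φ_{Γ₁}(x)·φ_{Γ₂∖o₂}(x) + φ_{Γ₁∖o₁}(x)·φ_{Γ₂}(x)
  - x·φ_{Γ₁∖o₁}(x)·φ_{Γ₂∖o₂}(x)`, where `φ(x) = det(xI - A)`. -/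
theorem charpoly_starProd {V₁ V₂ : Type*} [Fintype V₁] [Fintype V₂]
    [DecidableEq V₁] [DecidableEq V₂]
    (G₁ : SimpleGraph V₁) (o₁ : V₁) (G₂ : SimpleGraph V₂) (o₂ : V₂) (x : ℂ) :
    (x • (1 : Matrix (V₁ ⊕ {v : V₂ // v ≠ o₂}) (V₁ ⊕ {v : V₂ // v ≠ o₂}) ℂ)
        - adjMat (starProd G₁ o₁ G₂ o₂)).det
      = (x • (1 : Matrix V₁ V₁ ℂ) - adjMat G₁).det
          * (x • 1 - adjMatDelete G₂ o₂).det
        + (x • 1 - adjMatDelete G₁ o₁).det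
          * (x • (1 : Matrix V₂ V₂ ℂ) - adjMat G₂).det
        - x * ((x • 1 - adjMatDelete G₁ o₁).det * (x • 1 - adjMatDelete G₂ o₂).det) := by
  have hroot : (x • 1 - adjMat G₂) o₂ o₂ = x := by simp [adjMat]
  rw [adjMat_starProd, ← glueRoots_smul_one_sub, det_glueRoots, hroot,
    adjMatDelete_eq_deleteIndex, adjMatDelete_eq_deleteIndex,
    ← deleteIndex_smul_one_sub, ← deleteIndex_smul_one_sub]
  ring
end

section
/- Let Γ be a finite graph on d vertices and (H,o) a finite rooted graph. Then the characteristic polynomial of the comb product satisfies φ_{Γ▷H}(x) = φ_{H∖o}(x)^d · φ_Γ(φ_H(x)/φ_{H∖o}(x)), as an identity of rational functions (equivalently, of polynomials after clearing denominators). -/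
open Matrix
open Classical

/-- The comb product `Γ ▷ (H,o)`: a copy of `H` is glued at its root `o` to every
vertex of `Γ`.  Vertices are pairs `(x₁,x₂)`, and `(x₁,x₂) ~ (y₁,y₂)` iff either
`x₁ ~ y₁` in `Γ` and `x₂ = y₂ = o`, or `x₁ = y₁` and `x₂ ~ y₂` in `H`. -/
def combProd {V₁ V₂ : Type*} (G₁ : SimpleGraph V₁) (G₂ : SimpleGraph V₂) (o₂ : V₂) :
    SimpleGraph (V₁ × V₂) where
  Adj p q := (G₁.Adj p.1 q.1 ∧ p.2 = o₂ ∧ q.2 = o₂) ∨ (p.1 = q.1 ∧ G₂.Adj p.2 q.2)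
  symm := by
    constructor
    rintro p q (⟨h, h2, h3⟩ | ⟨h, h2⟩)
    · exact Or.inl ⟨h.symm, h3, h2⟩
    · exact Or.inr ⟨h.symm, h2.symm⟩
  loopless := by
    constructor
    rintro p (⟨h, -, -⟩ | ⟨-, h⟩)
    · exact G₁.irrefl h
    · exact G₂.irrefl h

/-!
Order the vertices of `Γ ▷ (H,o)` as the `d` roots followed by all non-root vertices. Then
`xI - A(Γ ▷ H) = (-A(Γ)) ⊗ E_oo + I ⊗ (xI - A(H))`, whose non-root block `I ⊗ (xI - A(H∖o))` is
block-diagonal. The Schur complement with respect to it commutes with `I ⊗ -`, so it is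
`-A(Γ) + s • I`, where `s` is the `1 × 1` Schur complement of `xI - A(H)` with respect to the
block of `H∖o`, i.e. `φ_H(x) / φ_{H∖o}(x)`.
-/

open Kronecker

namespace Matrix

variable {K m n : Type*} [Field K] [Fintype n] [DecidableEq n]

noncomputable def schurComplement₂₂ (M : Matrix (m ⊕ n) (m ⊕ n) K) : Matrix m m K :=
  M.toBlocks₁₁ - M.toBlocks₁₂ * M.toBlocks₂₂⁻¹ * M.toBlocks₂₁

theorem det_eq_det_toBlocks₂₂_mul_det_schurComplement₂₂ [Fintype m] [DecidableEq m]
    (M : Matrix (m ⊕ n) (m ⊕ n) K) (h : M.toBlocks₂₂.det ≠ 0) :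
    M.det = M.toBlocks₂₂.det * M.schurComplement₂₂.det := by
  let := M.toBlocks₂₂.invertibleOfIsUnitDet (isUnit_iff_ne_zero.2 h)
  conv_lhs => rw [← fromBlocks_toBlocks M]
  rw [det_fromBlocks₂₂, invOf_eq_nonsing_inv, schurComplement₂₂]

theorem schurComplement₂₂_fromBlocks_one_kronecker {l : Type*} [Fintype l] [DecidableEq l]
    (A : Matrix (l × m) (l × m) K) (Q : Matrix (m ⊕ n) (m ⊕ n) K) :
    schurComplement₂₂ (fromBlocks (A + (1 : Matrix l l K) ⊗ₖ Q.toBlocks₁₁)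
        ((1 : Matrix l l K) ⊗ₖ Q.toBlocks₁₂) ((1 : Matrix l l K) ⊗ₖ Q.toBlocks₂₁)
        ((1 : Matrix l l K) ⊗ₖ Q.toBlocks₂₂)) =
      A + (1 : Matrix l l K) ⊗ₖ Q.schurComplement₂₂ := by
  rw [schurComplement₂₂, schurComplement₂₂, toBlocks_fromBlocks₁₁, toBlocks_fromBlocks₁₂,
    toBlocks_fromBlocks₂₁, toBlocks_fromBlocks₂₂, inv_kronecker, inv_one, ← mul_kronecker_mul,
    ← mul_kronecker_mul, one_mul, one_mul, add_sub_assoc]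
  congr 1
  ext
  simp [mul_sub]

theorem eq_det_smul_one_of_unique [Fintype m] [DecidableEq m] [Unique m] (M : Matrix m m K) :
    M = M.det • 1 := by
  ext i j
  simp [det_unique, Subsingleton.elim i default, Subsingleton.elim j default]

end Matrix

open Matrix

section CombMatrix

variable {V₁ V₂ K : Type*} [DecidableEq V₁] [DecidableEq V₂] [Field K]

abbrev rootSplit (o : V₂) : {v // v = o} ⊕ {v // v ≠ o} ≃ V₂ := Equiv.sumCompl (· = o)

abbrev combSplit (o : V₂) : V₁ × {v // v = o} ⊕ V₁ × {v // v ≠ o} ≃ V₁ × V₂ :=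
  (Equiv.prodSumDistrib _ _ _).symm.trans ((Equiv.refl V₁).prodCongr (rootSplit o))

theorem submatrix_combSplit (P : Matrix V₁ V₁ K) (Q : Matrix V₂ V₂ K) (o : V₂) :
    (P ⊗ₖ single o o 1 + 1 ⊗ₖ Q).submatrix (combSplit o) (combSplit o) =
      fromBlocks (P ⊗ₖ 1 + 1 ⊗ₖ (Q.submatrix (rootSplit o) (rootSplit o)).toBlocks₁₁)
        (1 ⊗ₖ (Q.submatrix (rootSplit o) (rootSplit o)).toBlocks₁₂)
        (1 ⊗ₖ (Q.submatrix (rootSplit o) (rootSplit o)).toBlocks₂₁)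
        (1 ⊗ₖ (Q.submatrix (rootSplit o) (rootSplit o)).toBlocks₂₂) := by
  ext (⟨a, i, hi⟩ | ⟨a, i, hi⟩) (⟨b, j, hj⟩ | ⟨b, j, hj⟩) <;>
    simp [one_apply, toBlocks₁₁, toBlocks₁₂, toBlocks₂₁, toBlocks₂₂, eq_comm (a := o), *]

variable [Fintype V₁] [Fintype V₂]

theorem det_kronecker_single_add_one_kronecker (P : Matrix V₁ V₁ K) (Q : Matrix V₂ V₂ K)
    (o : V₂) (h : (Q.submatrix ((↑) : {v // v ≠ o} → V₂) (↑)).det ≠ 0) :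
    (P ⊗ₖ single o o 1 + 1 ⊗ₖ Q).det =
      (Q.submatrix ((↑) : {v // v ≠ o} → V₂) (↑)).det ^ Fintype.card V₁ *
        (P + (Q.det / (Q.submatrix ((↑) : {v // v ≠ o} → V₂) (↑)).det) • 1).det := by
  set Q' := Q.submatrix (rootSplit o) (rootSplit o)
  have hQ'₂₂ : Q'.toBlocks₂₂ = Q.submatrix (↑) (↑) := rfl
  rw [← hQ'₂₂] at h ⊢
  have hS : Q'.schurComplement₂₂ = (Q.det / Q'.toBlocks₂₂.det) • 1 := by
    rw [← det_submatrix_equiv_self (rootSplit o),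
      det_eq_det_toBlocks₂₂_mul_det_schurComplement₂₂ Q' h, mul_div_cancel_left₀ _ h]
    exact eq_det_smul_one_of_unique _
  have hD :
      ((1 : Matrix V₁ V₁ K) ⊗ₖ Q'.toBlocks₂₂).det = Q'.toBlocks₂₂.det ^ Fintype.card V₁ := by
    simp [det_kronecker]
  rw [← det_submatrix_equiv_self (combSplit o), submatrix_combSplit,
    det_eq_det_toBlocks₂₂_mul_det_schurComplement₂₂ _
      (by rw [toBlocks_fromBlocks₂₂, hD]; exact pow_ne_zero _ h),
    toBlocks_fromBlocks₂₂, hD, schurComplement₂₂_fromBlocks_one_kronecker, hS, kronecker_smul,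
    ← smul_kronecker, ← add_kronecker, det_kronecker]
  simp

end CombMatrix

theorem adjMat_combProd {V₁ V₂ : Type*} [Fintype V₁] [Fintype V₂] [DecidableEq V₂]
    (G₁ : SimpleGraph V₁) (G₂ : SimpleGraph V₂) (o : V₂) :
    adjMat (combProd G₁ G₂ o) = adjMat G₁ ⊗ₖ single o o 1 + 1 ⊗ₖ adjMat G₂ := by
  ext ⟨a, i⟩ ⟨b, j⟩
  rcases eq_or_ne a b with rfl | hab
  · simp [adjMat, combProd, single_apply, one_apply]
  · simp [adjMat, combProd, single_apply, one_apply, hab, eq_comm (a := o), ← ite_and, and_comm]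

/-- Schwenk's formula for the characteristic polynomial of a comb product:
`φ_{Γ▷H}(x) = φ_{H∖o}(x)^d · φ_Γ(φ_H(x)/φ_{H∖o}(x))` where `d` is the number of
vertices of `Γ`, stated at every point `x` where `φ_{H∖o}(x) ≠ 0` (which is the
identity of rational functions). -/
theorem charpoly_combProd {V₁ V₂ : Type*} [Fintype V₁] [Fintype V₂]
    [DecidableEq V₁] [DecidableEq V₂]
    (G₁ : SimpleGraph V₁) (G₂ : SimpleGraph V₂) (o₂ : V₂) (x : ℂ)
    (h : (x • (1 : Matrix {v : V₂ // v ≠ o₂} {v : V₂ // v ≠ o₂} ℂ)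
      - adjMatDelete G₂ o₂).det ≠ 0) :
    (x • (1 : Matrix (V₁ × V₂) (V₁ × V₂) ℂ) - adjMat (combProd G₁ G₂ o₂)).det
      = (x • (1 : Matrix {v : V₂ // v ≠ o₂} {v : V₂ // v ≠ o₂} ℂ)
            - adjMatDelete G₂ o₂).det ^ (Fintype.card V₁)
        * (((x • (1 : Matrix V₂ V₂ ℂ) - adjMat G₂).det
              / (x • (1 : Matrix {v : V₂ // v ≠ o₂} {v : V₂ // v ≠ o₂} ℂ)
                  - adjMatDelete G₂ o₂).det)
            • (1 : Matrix V₁ V₁ ℂ) - adjMat G₁).det := by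
  have hdel : (x • (1 : Matrix V₂ V₂ ℂ) - adjMat G₂).submatrix ((↑) : {v // v ≠ o₂} → V₂) (↑) =
      x • 1 - adjMatDelete G₂ o₂ := by
    ext i j
    simp [adjMatDelete, one_apply, Subtype.ext_iff]
  have hchar : x • (1 : Matrix (V₁ × V₂) (V₁ × V₂) ℂ) - adjMat (combProd G₁ G₂ o₂) =
      (-adjMat G₁) ⊗ₖ single o₂ o₂ 1 + 1 ⊗ₖ (x • 1 - adjMat G₂) := by
    rw [adjMat_combProd]
    ext ⟨a, i⟩ ⟨b, j⟩
    simp only [Matrix.sub_apply, Matrix.add_apply, Matrix.smul_apply, kroneckerMap_apply,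
      one_apply, Matrix.neg_apply, Prod.mk.injEq, ite_and]
    split_ifs <;> ring
  rw [hchar, det_kronecker_single_add_one_kronecker _ _ _ (by rwa [hdel]), hdel, neg_add_eq_sub]
end

section
/- The adjacency matrix of the friendship graph F_N on 2N+1 vertices has eigenvalues (1+√(1+8N))/2 and (1-√(1+8N))/2 each with multiplicity 1, eigenvalue -1 with multiplicity N, and eigenvalue 1 with multiplicity N-1. -/
/-!
Put the hub first and then the `N` edges. In this order `x • 1 - A` is the block-diagonal
matrix with blocks `!![x, -1; -1, x]`, bordered by a row and a column of `-1`s, and each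
block has row sums `x - 1`. For `x ≠ ±1` the blocks are invertible, and the Schur complement
of the block-diagonal part is the scalar `x - 2N / (x - 1)`. This gives
`det = (x² - x - 2N)(x + 1)^N (x - 1)^(N - 1)`. Both sides are polynomials in `x`, so the
identity also holds at `x = ±1`.
-/

open Matrix

/-- The adjacency matrix of the friendship graph `F_N` on `2N+1` vertices
`{0,1,…,2N}`: vertex `0` is adjacent to every other vertex, and the only other
edges are `{2i-1, 2i}` for `1 ≤ i ≤ N`. -/
def friendshipAdj (N : ℕ) : Matrix (Fin (2 * N + 1)) (Fin (2 * N + 1)) ℂ :=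
  Matrix.of fun i j =>
    if (i = 0 ∧ j ≠ 0) ∨ (j = 0 ∧ i ≠ 0)
        ∨ ((i : ℕ) % 2 = 1 ∧ (j : ℕ) = (i : ℕ) + 1)
        ∨ ((j : ℕ) % 2 = 1 ∧ (i : ℕ) = (j : ℕ) + 1)
      then 1 else 0

open Polynomial in
theorem Matrix.det_smul_one_sub_eq_eval_of_finite {n R : Type*} [Fintype n] [DecidableEq n]
    [CommRing R] [IsDomain R] [Infinite R] (A : Matrix n n R) (p : R[X]) {s : Set R}
    (hs : s.Finite) (h : ∀ x ∉ s, (x • (1 : Matrix n n R) - A).det = p.eval x) (x : R) :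
    (x • (1 : Matrix n n R) - A).det = p.eval x := by
  have hcharpoly (y : R) : (y • (1 : Matrix n n R) - A).det = A.charpoly.eval y := by
    rw [eval_charpoly, scalar_apply, smul_one_eq_diagonal]
  have : A.charpoly = p := eq_of_infinite_eval_eq _ _ <| hs.infinite_compl.mono fun y hy => by
    rw [Set.mem_ofPred_eq, ← hcharpoly, h y hy]
  rw [hcharpoly, this]

theorem Matrix.blockDiagonal_mulVec_one {m o α : Type*} [Fintype m] [Fintype o] [DecidableEq o]
    [NonAssocSemiring α] (B : o → Matrix m m α) (r : α) (h : ∀ k, B k *ᵥ 1 = r • 1) :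
    blockDiagonal B *ᵥ 1 = r • 1 := by
  ext ⟨i, k⟩
  simpa [mulVec, dotProduct, blockDiagonal_apply, Fintype.sum_prod_type] using congrFun (h k) i

theorem Matrix.det_fromBlocks_const_of_mulVec_one {m K : Type*} [Fintype m] [DecidableEq m]
    [Field K] (a b c r : K) (D : Matrix m m K) (hD : IsUnit D.det) (hr : r ≠ 0)
    (hDr : D *ᵥ 1 = r • 1) :
    (fromBlocks (of fun _ _ => a : Matrix Unit Unit K) (of fun _ _ => b) (of fun _ _ => c) D).det
      = D.det * (a - b * c * Fintype.card m / r) := by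
  let _ := D.invertibleOfIsUnitDet hD
  have hinv : ⅟D *ᵥ 1 = r⁻¹ • 1 := by
    rw [← inv_smul_smul₀ hr (⅟D *ᵥ 1), ← mulVec_smul, ← hDr, mulVec_mulVec, invOf_mul_self,
      one_mulVec]
  have hrowsum (i : m) : ∑ j, ⅟D i j = r⁻¹ := by
    simpa [mulVec, dotProduct] using congrFun hinv i
  rw [det_fromBlocks₂₂, det_unique (_ : Matrix Unit Unit K)]
  congr 1
  simp only [Matrix.sub_apply, of_apply, mul_apply, ← Finset.mul_sum, ← Finset.sum_mul,
    Finset.sum_comm (γ := m), hrowsum]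
  simp [div_eq_mul_inv]
  ring

theorem sq_sub_self_sub_eq_mul_sub_mul_sub (N : ℕ) (x : ℂ) :
    x ^ 2 - x - 2 * N = (x - ((1 + Real.sqrt (1 + 8 * N)) / 2 : ℝ))
        * (x - ((1 - Real.sqrt (1 + 8 * N)) / 2 : ℝ)) := by
  have hsq : ((Real.sqrt (1 + 8 * N) : ℝ) : ℂ) ^ 2 = 1 + 8 * N := by
    rw [← Complex.ofReal_pow, Real.sq_sqrt (by positivity)]
    push_cast
    ring
  push_cast
  linear_combination (1 / 4 : ℂ) * hsq

def friendshipIndex (N : ℕ) : Unit ⊕ Fin 2 × Fin N → Fin (2 * N + 1)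
  | .inl _ => 0
  | .inr (r, q) => ⟨2 * q + 1 + r, by omega⟩

theorem friendshipIndex_bijective (N : ℕ) : (friendshipIndex N).Bijective := by
  rw [Fintype.bijective_iff_injective_and_card]
  refine ⟨?_, by
    simp only [Fintype.card_sum, Fintype.card_unit, Fintype.card_prod, Fintype.card_fin]; ring⟩
  rintro (_ | ⟨r, q⟩) (_ | ⟨r', q'⟩) h <;>
    simp only [friendshipIndex, Fin.ext_iff, Fin.val_zero] at h
  · rfl
  · omega
  · omega
  · simp only [Sum.inr.injEq, Prod.mk.injEq, Fin.ext_iff]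
    omega

theorem friendshipAdj_submatrix (N : ℕ) :
    (friendshipAdj N).submatrix (friendshipIndex N) (friendshipIndex N)
      = fromBlocks 0 (of fun _ _ => 1) (of fun _ _ => 1)
          (blockDiagonal fun _ => !![0, 1; 1, 0]) := by
  ext (_ | ⟨r, q⟩) (_ | ⟨r', q'⟩) <;>
    simp only [friendshipAdj, friendshipIndex, submatrix_apply, of_apply, fromBlocks_apply₁₁,
      fromBlocks_apply₁₂, fromBlocks_apply₂₁, fromBlocks_apply₂₂, blockDiagonal_apply, ne_eq,
      Fin.ext_iff, Fin.coe_ofNat_eq_mod, Nat.zero_mod]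
  · simp
  · exact if_pos (Or.inl ⟨trivial, by omega⟩)
  · exact if_pos (Or.inr (Or.inl ⟨trivial, by omega⟩))
  · fin_cases r <;> fin_cases r' <;> simp <;> grind

theorem smul_one_sub_friendshipAdj_submatrix (N : ℕ) (x : ℂ) :
    (x • (1 : Matrix (Fin (2 * N + 1)) (Fin (2 * N + 1)) ℂ) - friendshipAdj N).submatrix
        (friendshipIndex N) (friendshipIndex N)
      = fromBlocks (of fun _ _ => x) (of fun _ _ => -1) (of fun _ _ => -1)
          (blockDiagonal fun _ => !![x, -1; -1, x]) := by
  change x • (1 : Matrix (Fin (2 * N + 1)) (Fin (2 * N + 1)) ℂ).submatrix _ _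
    - (friendshipAdj N).submatrix _ _ = _
  rw [submatrix_one _ (friendshipIndex_bijective N).injective, friendshipAdj_submatrix]
  ext (_ | ⟨r, q⟩) (_ | ⟨r', q'⟩)
  · simp
  · simp [one_apply]
  · simp [one_apply]
  · fin_cases r <;> fin_cases r' <;> by_cases q = q' <;> simp [one_apply, blockDiagonal_apply, *]

theorem det_smul_one_sub_friendshipAdj_of_ne (N : ℕ) (hN : 1 ≤ N) (x : ℂ) (h₁ : x ≠ 1)
    (h₂ : x ≠ -1) :
    (x • (1 : Matrix (Fin (2 * N + 1)) (Fin (2 * N + 1)) ℂ) - friendshipAdj N).det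
      = (x ^ 2 - x - 2 * N) * (x + 1) ^ N * (x - 1) ^ (N - 1) := by
  have hx₁ : x - 1 ≠ 0 := sub_ne_zero.mpr h₁
  have hx₂ : x + 1 ≠ 0 := by rwa [← sub_neg_eq_add, sub_ne_zero]
  have hdet : (blockDiagonal fun _ : Fin N => !![x, -1; -1, x]).det
      = (x + 1) ^ N * (x - 1) ^ N := by
    rw [det_blockDiagonal, det_fin_two_of, Finset.prod_const, Finset.card_univ, Fintype.card_fin,
      ← mul_pow]
    ring
  have hrowsum : (blockDiagonal fun _ : Fin N => !![x, -1; -1, x]) *ᵥ 1 = (x - 1) • 1 :=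
    blockDiagonal_mulVec_one _ _ fun _ => by
      ext i
      fin_cases i <;> simp [mulVec, dotProduct, Fin.sum_univ_two] <;> ring
  rw [← det_submatrix_equiv_self (Equiv.ofBijective _ (friendshipIndex_bijective N)),
    Equiv.coe_ofBijective, smul_one_sub_friendshipAdj_submatrix,
    det_fromBlocks_const_of_mulVec_one _ _ _ _ _ (by simp [hdet, hx₁, hx₂]) hx₁ hrowsum, hdet]
  obtain ⟨M, rfl⟩ : ∃ M, N = M + 1 := ⟨N - 1, by omega⟩
  simp only [Fintype.card_prod, Fintype.card_fin, Nat.add_sub_cancel]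
  field_simp
  push_cast
  ring

open Polynomial in
theorem det_smul_one_sub_friendshipAdj (N : ℕ) (hN : 1 ≤ N) (x : ℂ) :
    (x • (1 : Matrix (Fin (2 * N + 1)) (Fin (2 * N + 1)) ℂ) - friendshipAdj N).det
      = (x ^ 2 - x - 2 * N) * (x + 1) ^ N * (x - 1) ^ (N - 1) := by
  have h := det_smul_one_sub_eq_eval_of_finite (friendshipAdj N)
    ((X ^ 2 - X - C (2 * N : ℂ)) * (X + 1) ^ N * (X - 1) ^ (N - 1)) (Set.toFinite {1, -1})
    (fun y hy => by
      simp only [Set.mem_insert_iff, Set.mem_singleton_iff, not_or] at hy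
      simpa using det_smul_one_sub_friendshipAdj_of_ne N hN y hy.1 hy.2) x
  simpa using h

/-- The adjacency matrix of the friendship graph `F_N` has eigenvalues
`(1+√(1+8N))/2` and `(1-√(1+8N))/2` each with multiplicity `1`, `-1` with
multiplicity `N`, and `1` with multiplicity `N-1`; equivalently its characteristic
polynomial is `(x - (1+√(1+8N))/2)(x - (1-√(1+8N))/2)(x+1)^N (x-1)^(N-1)`. -/
theorem friendship_eigenvalues (N : ℕ) (hN : 1 ≤ N) (x : ℂ) :
    (x • (1 : Matrix (Fin (2 * N + 1)) (Fin (2 * N + 1)) ℂ) - friendshipAdj N).det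
      = (x - ((1 + Real.sqrt (1 + 8 * N)) / 2 : ℝ))
        * (x - ((1 - Real.sqrt (1 + 8 * N)) / 2 : ℝ))
        * (x + 1) ^ N * (x - 1) ^ (N - 1) := by
  rw [det_smul_one_sub_friendshipAdj N hN, sq_sub_self_sub_eq_mul_sub_mul_sub]
end

section
/- Fix an integer d ≥ 2. For each k ≥ 1 define α_k(d,N) = Σ over strictly increasing tuples 1 ≤ j₁ < j₂ < ... < j_k ≤ N of d^{j₁-1} (with α_k(d,N) = 0 for N < k). Then for each k there exists a polynomial P_k in two variables with rational coefficients such that α_k(d,N) = d^N/(d-1)^k + P_k(1/(d-1), N) for all d ≥ 2 and N ≥ 0. -/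
/-- `α_k(d,N) = Σ_{1 ≤ j₁ < j₂ < ... < j_k ≤ N} d^{j₁-1}`: the sum over `k`-element
subsets `{j₁ < ... < j_k}` of `{1,…,N}` of `d` raised to the predecessor of the
minimum element (it is `0` when `N < k`). -/
def alphaQ (k d N : ℕ) : ℚ :=
  ∑ s ∈ Finset.powersetCard k (Finset.Icc 1 N), (d : ℚ) ^ ((WithTop.untopD 0 s.min) - 1)

/-! The subsets containing `N + 1` give the recurrence `α_{k+1}(N+1) = α_{k+1}(N) + α_k(N)`,
so `α_{k+1}(d, N) = Σ_{M<N} α_k(d, M)` and `α_1(d, N) = Σ_{M<N} d^M`. Summing over `M < N`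
turns `d^M/(d-1)^k` into `d^N/(d-1)^(k+1) - 1/(d-1)^(k+1)` (geometric series) and a polynomial
in `(1/(d-1), M)` into a polynomial in `(1/(d-1), N)` (Faulhaber), so the shape
"geometric term plus polynomial" propagates from `k` to `k + 1`. -/

open Finset

theorem Finset.sum_powersetCard_succ_insert {α M : Type*} [DecidableEq α] [AddCommMonoid M]
    {x : α} {s : Finset α} (hx : x ∉ s) (n : ℕ) (f : Finset α → M) :
    ∑ t ∈ powersetCard (n + 1) (insert x s), f t =
      ∑ t ∈ powersetCard (n + 1) s, f t + ∑ t ∈ powersetCard n s, f (insert x t) := by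
  have hx_notMem : ∀ t ∈ powersetCard n s, x ∉ t := fun t ht hxt =>
    hx ((mem_powersetCard.mp ht).1 hxt)
  have hinj : Set.InjOn (insert x) (powersetCard n s : Set (Finset α)) := by
    intro t ht u hu htu
    rw [← erase_insert (hx_notMem t ht), ← erase_insert (hx_notMem u hu), htu]
  have hdisj : Disjoint (powersetCard (n + 1) s) ((powersetCard n s).image (insert x)) := by
    rw [disjoint_left]
    intro t ht ht'
    obtain ⟨u, -, rfl⟩ := mem_image.mp ht'
    exact hx ((mem_powersetCard.mp ht).1 (mem_insert_self x u))
  rw [powersetCard_succ_insert hx, sum_union hdisj, sum_image hinj]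

lemma alphaQ_zero_right {k : ℕ} (hk : k ≠ 0) (d : ℕ) : alphaQ k d 0 = 0 := by
  rw [alphaQ, Icc_eq_empty (by omega), powersetCard_eq_empty.mpr (by simpa [Nat.pos_iff_ne_zero]), sum_empty]

lemma alphaQ_succ_add_one (k d N : ℕ) :
    alphaQ (k + 1) d (N + 1) = alphaQ (k + 1) d N +
      ∑ t ∈ powersetCard k (Icc 1 N), (d : ℚ) ^ (WithTop.untopD 0 (insert (N + 1) t).min - 1) := by
  rw [alphaQ, ← insert_Icc_right_eq_Icc_add_one (by omega),
    sum_powersetCard_succ_insert (by simp), alphaQ]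

lemma alphaQ_one_eq_sum_range_pow (d N : ℕ) : alphaQ 1 d N = ∑ M ∈ range N, (d : ℚ) ^ M := by
  induction N with
  | zero => simp [alphaQ_zero_right one_ne_zero]
  | succ N ih =>
    rw [alphaQ_succ_add_one, ih, sum_range_succ, powersetCard_zero, sum_singleton,
      insert_empty, min_singleton, WithTop.untopD_coe, Nat.add_sub_cancel]

lemma alphaQ_succ_eq_sum_range {k : ℕ} (hk : k ≠ 0) (d N : ℕ) :
    alphaQ (k + 1) d N = ∑ M ∈ range N, alphaQ k d M := by
  induction N with
  | zero => simp [alphaQ_zero_right (Nat.succ_ne_zero k)]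
  | succ N ih =>
    rw [alphaQ_succ_add_one, ih, sum_range_succ, alphaQ]
    congr 1
    refine sum_congr rfl fun t ht => ?_
    obtain ⟨hsub, hcard⟩ := mem_powersetCard.mp ht
    obtain ⟨m, hm⟩ := Finset.min_of_nonempty (card_pos (s := t) |>.mp (by omega))
    -- every element of `t` is at most `N`, so inserting `N + 1` keeps the minimum
    have hmN : m ≤ N + 1 := by
      have := hsub (mem_of_min hm)
      rw [mem_Icc] at this
      omega
    rw [min_insert, hm, min_eq_right (WithTop.coe_le_coe.mpr hmN)]

/-- Faulhaber's formula, applied monomial by monomial. -/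
theorem MvPolynomial.exists_eval_eq_sum_range_eval (P : MvPolynomial (Fin 2) ℚ) :
    ∃ R : MvPolynomial (Fin 2) ℚ, ∀ (x : ℚ) (N : ℕ),
      ∑ M ∈ range N, eval ![x, (M : ℚ)] P = eval ![x, (N : ℚ)] R := by
  induction P using MvPolynomial.induction_on' with
  | monomial u a =>
    refine ⟨C a * X 0 ^ u 0 * ∑ i ∈ range (u 1 + 1),
        C (bernoulli i * (u 1 + 1).choose i / (u 1 + 1)) * X 1 ^ (u 1 + 1 - i), fun x N => ?_⟩
    have heval : ∀ y : ℚ, eval ![x, y] (monomial u a) = a * x ^ u 0 * y ^ u 1 := fun y => by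
      rw [eval_monomial, Finsupp.prod_pow, Fin.prod_univ_two]
      simp [mul_assoc]
    simp only [heval, ← mul_sum, sum_range_pow, map_mul, map_pow, map_sum, eval_C, eval_X,
      Matrix.cons_val_zero, Matrix.cons_val_one]
    exact congrArg _ (sum_congr rfl fun i _ => by ring)
  | add p q hp hq =>
    obtain ⟨Rp, hRp⟩ := hp
    obtain ⟨Rq, hRq⟩ := hq
    exact ⟨Rp + Rq, fun x N => by simp only [map_add, sum_add_distrib, hRp, hRq]⟩

def IsGeometricAddPoly (k : ℕ) (f : ℕ → ℕ → ℚ) : Prop :=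
  ∃ P : MvPolynomial (Fin 2) ℚ, ∀ d N : ℕ, 2 ≤ d →
    f d N = (d : ℚ) ^ N / ((d : ℚ) - 1) ^ k + MvPolynomial.eval ![1 / ((d : ℚ) - 1), (N : ℚ)] P

lemma isGeometricAddPoly_pow : IsGeometricAddPoly 0 fun (d : ℕ) N => (d : ℚ) ^ N :=
  ⟨0, fun d N _ => by simp⟩

lemma IsGeometricAddPoly.sum_range {k : ℕ} {f : ℕ → ℕ → ℚ} (hf : IsGeometricAddPoly k f) :
    IsGeometricAddPoly (k + 1) fun d N => ∑ M ∈ range N, f d M := by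
  obtain ⟨P, hP⟩ := hf
  obtain ⟨R, hR⟩ := P.exists_eval_eq_sum_range_eval
  refine ⟨R - MvPolynomial.X 0 ^ (k + 1), fun d N hd => ?_⟩
  have hd1 : (d : ℚ) - 1 ≠ 0 := sub_ne_zero.mpr (by norm_cast; omega)
  calc ∑ M ∈ range N, f d M
      = ∑ M ∈ range N, ((d : ℚ) ^ M / ((d : ℚ) - 1) ^ k
          + MvPolynomial.eval ![1 / ((d : ℚ) - 1), (M : ℚ)] P) :=
        sum_congr rfl fun M _ => hP d M hd
    _ = (∑ M ∈ range N, (d : ℚ) ^ M) / ((d : ℚ) - 1) ^ k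
          + MvPolynomial.eval ![1 / ((d : ℚ) - 1), (N : ℚ)] R := by
        rw [sum_add_distrib, sum_div, hR]
    _ = _ := by
        rw [geom_sum_eq (sub_ne_zero.mp hd1)]
        simp only [map_sub, map_pow, MvPolynomial.eval_X, Matrix.cons_val_zero]
        rw [div_pow, one_pow]
        field_simp
        ring

/-- For every `k ≥ 1` there is a polynomial `P_k` in two variables with rational
coefficients such that `α_k(d,N) = d^N/(d-1)^k + P_k(1/(d-1), N)` for all integers
`d ≥ 2` and `N ≥ 0`. -/
theorem alpha_eq_geometric_add_poly (k : ℕ) (hk : 1 ≤ k) :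
    ∃ P : MvPolynomial (Fin 2) ℚ, ∀ d N : ℕ, 2 ≤ d →
      alphaQ k d N = (d : ℚ) ^ N / ((d : ℚ) - 1) ^ k
        + MvPolynomial.eval ![1 / ((d : ℚ) - 1), (N : ℚ)] P := by
  change IsGeometricAddPoly k (alphaQ k)
  induction k, hk using Nat.le_induction with
  | base =>
    have halpha : alphaQ 1 = fun (d : ℕ) N => ∑ M ∈ range N, (d : ℚ) ^ M :=
      funext₂ alphaQ_one_eq_sum_range_pow
    exact halpha ▸ isGeometricAddPoly_pow.sum_range
  | succ k hk ih =>
    have halpha : alphaQ (k + 1) = fun d N => ∑ M ∈ range N, alphaQ k d M :=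
      funext₂ (alphaQ_succ_eq_sum_range (by omega))
    exact halpha ▸ ih.sum_range
end

section
/- Let β₀ = 1 and for n ≥ 1 define β_n = Σ_{ℓ=0}^{n-1} binomial(n+ℓ, n-ℓ) · (2n/(n+ℓ)) · β_ℓ. Then β_n ≤ (11n)^{2n} for all n ≥ 1. -/
/-- The sequence `β₀ = 1`, `β_n = Σ_{ℓ=0}^{n-1} C(n+ℓ, n-ℓ) · (2n/(n+ℓ)) · β_ℓ`. -/
def beta : ℕ → ℚ
  | 0 => 1
  | (n + 1) =>
      ∑ ℓ : Fin (n + 1),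
        ((n + 1 + (ℓ : ℕ)).choose (n + 1 - (ℓ : ℕ)) : ℚ)
          * (2 * (n + 1) / ((n : ℚ) + 1 + (ℓ : ℕ))) * beta (ℓ : ℕ)
  decreasing_by exact Nat.lt_succ_of_le (Nat.lt_succ_iff.mp ℓ.isLt)

/-!
The bound is proved in the stronger form `β_n ≤ (11x)^{2n}` for every `x ≥ n`, which survives
strong induction without a separate case `ℓ = 0`. In the recursion for `β_{m+1}`, write
`N = m + 1` and `k = N - ℓ ≥ 1`. Then `C(N+ℓ, k) ≤ (2N)^k ≤ (2x)^k`, the factor `2N/(N+ℓ)` is at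
most `2`, and `2x · (2x)^k ≤ (11x)^{2k}`, so each of the `N` summands is at most `(11x)^{2N} / x`.
-/

lemma choose_add_sub_le_two_mul_pow {n ℓ : ℕ} (h : ℓ ≤ n) :
    (n + ℓ).choose (n - ℓ) ≤ (2 * n) ^ (n - ℓ) :=
  (Nat.choose_le_pow _ _).trans (Nat.pow_le_pow_left (by omega) _)

lemma two_mul_pow_succ_le_pow {K : Type*} [Field K] [LinearOrder K] [IsStrictOrderedRing K]
    {x : K} (hx : 1 ≤ x) {k : ℕ} (hk : 1 ≤ k) : (2 * x) ^ (k + 1) ≤ (11 * x) ^ (2 * k) :=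
  calc (2 * x) ^ (k + 1) ≤ (2 * x) ^ (2 * k) := pow_le_pow_right₀ (by linarith) (by omega)
    _ ≤ (11 * x) ^ (2 * k) := pow_le_pow_left₀ (by linarith) (by linarith) _

lemma beta_nonneg : ∀ n, 0 ≤ beta n
  | 0 => by simp [beta]
  | m + 1 => by
    rw [beta]
    exact Finset.sum_nonneg fun ℓ _ => mul_nonneg (by positivity) (beta_nonneg ℓ)

lemma beta_summand_le {m ℓ : ℕ} (hℓ : ℓ ≤ m) {x : ℚ} (hx : (m + 1 : ℚ) ≤ x) :
    ((m + 1 + ℓ).choose (m + 1 - ℓ) : ℚ) * (2 * (m + 1) / ((m : ℚ) + 1 + ℓ))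
        * (11 * x) ^ (2 * ℓ) ≤ (11 * x) ^ (2 * (m + 1)) / x := by
  have hx1 : 1 ≤ x := by linarith [(m.cast_nonneg : (0 : ℚ) ≤ m)]
  have hchoose : ((m + 1 + ℓ).choose (m + 1 - ℓ) : ℚ) ≤ (2 * x) ^ (m + 1 - ℓ) :=
    calc ((m + 1 + ℓ).choose (m + 1 - ℓ) : ℚ) ≤ ((2 * (m + 1) : ℕ) : ℚ) ^ (m + 1 - ℓ) := by
          exact_mod_cast choose_add_sub_le_two_mul_pow (by omega)
      _ ≤ (2 * x) ^ (m + 1 - ℓ) := pow_le_pow_left₀ (by positivity) (by push_cast; linarith) _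
  have hratio : 2 * ((m : ℚ) + 1) / ((m : ℚ) + 1 + ℓ) ≤ 2 := by
    rw [div_le_iff₀ (by positivity)]
    linarith [(ℓ.cast_nonneg : (0 : ℚ) ≤ ℓ)]
  rw [le_div_iff₀ (by linarith)]
  calc _ ≤ (2 * x) ^ (m + 1 - ℓ) * 2 * (11 * x) ^ (2 * ℓ) * x := by gcongr
    _ = (2 * x) ^ (m + 1 - ℓ + 1) * (11 * x) ^ (2 * ℓ) := by ring
    _ ≤ (11 * x) ^ (2 * (m + 1 - ℓ)) * (11 * x) ^ (2 * ℓ) := by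
        gcongr
        exact two_mul_pow_succ_le_pow hx1 (by omega)
    _ = (11 * x) ^ (2 * (m + 1)) := by rw [← pow_add]; congr 1; omega

theorem beta_le_pow_of_le : ∀ (n : ℕ) {x : ℚ}, (n : ℚ) ≤ x → beta n ≤ (11 * x) ^ (2 * n)
  | 0, _, _ => by simp [beta]
  | m + 1, x, hx => by
    have hx0 : 0 < x := by push_cast at hx; linarith [(m.cast_nonneg : (0 : ℚ) ≤ m)]
    rw [beta]
    calc _ ≤ ∑ _ : Fin (m + 1), (11 * x) ^ (2 * (m + 1)) / x := by
          refine Finset.sum_le_sum fun ℓ _ =>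
            le_trans ?_ (beta_summand_le ℓ.is_le (by simpa using hx))
          gcongr
          exact beta_le_pow_of_le ℓ (le_trans (by exact_mod_cast ℓ.is_le.trans m.le_succ) hx)
      _ = (m + 1 : ℕ) * (11 * x) ^ (2 * (m + 1)) / x := by simp [mul_div_assoc]
      _ ≤ (11 * x) ^ (2 * (m + 1)) := by
          rw [div_le_iff₀ hx0, mul_comm]
          gcongr

theorem beta_le_general (n : ℕ) : beta n ≤ ((11 * n : ℚ)) ^ (2 * n) :=
  beta_le_pow_of_le n le_rfl

/-- `β_n ≤ (11 n)^{2n}` for all `n ≥ 1`. -/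
theorem beta_le (n : ℕ) (hn : 1 ≤ n) : beta n ≤ ((11 * n : ℚ)) ^ (2 * n) :=
  beta_le_general n
end

section
/- Let β₀ = 1 and β_n = Σ_{ℓ=0}^{n-1} binomial(n+ℓ, n-ℓ)·(2n/(n+ℓ))·β_ℓ for n ≥ 1. Then the series Σ_{n≥1} β_n^{-1/(2n)} diverges (Carleman's condition). -/
open Finset

def betaCoeff (n ℓ : ℕ) : ℚ :=
  ((n + ℓ).choose (n - ℓ) : ℚ) * (2 * n / (n + ℓ))

lemma beta_succ (n : ℕ) :
    beta (n + 1) = ∑ ℓ : Fin (n + 1), betaCoeff (n + 1) ℓ * beta ℓ := by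
  rw [beta]
  push_cast [betaCoeff]
  rfl

lemma betaCoeff_pos {n ℓ : ℕ} (h : ℓ < n) : 0 < betaCoeff n ℓ := by
  have hchoose : 0 < (n + ℓ).choose (n - ℓ) := Nat.choose_pos (by omega)
  have hn : (0 : ℚ) < n := by exact_mod_cast h.trans_le' (Nat.zero_le ℓ)
  unfold betaCoeff
  positivity

lemma betaCoeff_le {n ℓ : ℕ} {x : ℚ} (h : ℓ < n) (hx : (n : ℚ) ≤ x) :
    betaCoeff n ℓ ≤ 2 * (2 * x) ^ (n - ℓ) := by
  have hℓn : (ℓ : ℚ) ≤ n := by exact_mod_cast h.le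
  have hn : (0 : ℚ) < n := by exact_mod_cast h.trans_le' (Nat.zero_le ℓ)
  have hx0 : 0 ≤ x := hn.le.trans hx
  have hchoose : ((n + ℓ).choose (n - ℓ) : ℚ) ≤ (2 * x) ^ (n - ℓ) :=
    calc ((n + ℓ).choose (n - ℓ) : ℚ) ≤ ((n + ℓ : ℕ) : ℚ) ^ (n - ℓ) := by
          exact_mod_cast Nat.choose_le_pow _ _
      _ ≤ (2 * x) ^ (n - ℓ) := by
          push_cast
          gcongr
          linarith
  have hratio : 2 * (n : ℚ) / (n + ℓ) ≤ 2 := by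
    rw [div_le_iff₀ (by positivity)]
    linarith [(Nat.cast_nonneg ℓ : (0 : ℚ) ≤ ℓ)]
  calc betaCoeff n ℓ ≤ (2 * x) ^ (n - ℓ) * 2 :=
        mul_le_mul hchoose hratio (by positivity) (by positivity)
    _ = 2 * (2 * x) ^ (n - ℓ) := mul_comm _ _

lemma beta_pos (n : ℕ) : 0 < beta n := by
  induction n using Nat.strong_induction_on with
  | _ n ih =>
    cases n with
    | zero => simp [beta]
    | succ n =>
      rw [beta_succ]
      exact sum_pos (fun ℓ _ => mul_pos (betaCoeff_pos ℓ.isLt) (ih ℓ ℓ.isLt)) univ_nonempty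

lemma sum_range_two_mul_four_pow_le (n : ℕ) : ∑ ℓ ∈ range n, 2 * 4 ^ ℓ ≤ 4 ^ n := by
  induction n with
  | zero => simp
  | succ n ih =>
    rw [sum_range_succ, pow_succ]
    omega

-- Bounding by `(8x)^n` for every `x ≥ n`, rather than by `(8n)^n`, lets the induction hypothesis
-- be applied to each `β_ℓ` with the same `x`.
lemma beta_le_pow (n : ℕ) {x : ℚ} (hx : (n : ℚ) ≤ x) : beta n ≤ (8 * x) ^ n := by
  induction n using Nat.strong_induction_on with
  | _ n ih =>
    cases n with
    | zero => simp [beta]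
    | succ n =>
      have hx0 : 0 ≤ x := le_trans (Nat.cast_nonneg _) hx
      have hterm (ℓ : Fin (n + 1)) :
          betaCoeff (n + 1) ℓ * beta ℓ ≤ (2 * x) ^ (n + 1) * (2 * 4 ^ (ℓ : ℕ)) :=
        calc betaCoeff (n + 1) ℓ * beta ℓ
            ≤ 2 * (2 * x) ^ (n + 1 - ℓ) * (8 * x) ^ (ℓ : ℕ) := by
              have hℓx : ((ℓ : ℕ) : ℚ) ≤ x := le_trans (by exact_mod_cast ℓ.isLt.le) hx
              exact mul_le_mul (betaCoeff_le ℓ.isLt hx) (ih ℓ ℓ.isLt hℓx)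
                (beta_pos ℓ).le (by positivity)
          _ = (2 * x) ^ (n + 1) * (2 * 4 ^ (ℓ : ℕ)) := by
              have hsplit :
                  (2 * x) ^ (n + 1) = (2 * x) ^ (n + 1 - ℓ) * (2 * x) ^ (ℓ : ℕ) := by
                rw [← pow_add, Nat.sub_add_cancel ℓ.isLt.le]
              have h8 : (8 * x) ^ (ℓ : ℕ) = (2 * x) ^ (ℓ : ℕ) * 4 ^ (ℓ : ℕ) := by
                rw [← mul_pow]
                ring
              rw [hsplit, h8]
              ring
      calc beta (n + 1) ≤ ∑ ℓ : Fin (n + 1), (2 * x) ^ (n + 1) * (2 * 4 ^ (ℓ : ℕ)) := by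
            rw [beta_succ]
            exact sum_le_sum fun ℓ _ => hterm ℓ
        _ = (2 * x) ^ (n + 1) * ((∑ ℓ ∈ range (n + 1), 2 * 4 ^ ℓ : ℕ) : ℚ) := by
            rw [← mul_sum, Fin.sum_univ_eq_sum_range (fun ℓ => (2 : ℚ) * 4 ^ ℓ)]
            push_cast
            rfl
        _ ≤ (2 * x) ^ (n + 1) * ((4 ^ (n + 1) : ℕ) : ℚ) := by
            gcongr
            exact sum_range_two_mul_four_pow_le _
        _ = (8 * x) ^ (n + 1) := by
            push_cast
            rw [← mul_pow]
            ring_nf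

lemma inv_le_rpow_of_le_pow {b y : ℝ} {m : ℕ} (hm : m ≠ 0) (hb : 0 < b) (hy : 1 ≤ y)
    (hby : b ≤ y ^ m) : y⁻¹ ≤ b ^ (-(1 : ℝ) / (2 * m)) :=
  calc y⁻¹ = y ^ (-1 : ℝ) := (Real.rpow_neg_one y).symm
    _ ≤ y ^ (-(1 : ℝ) / 2) := Real.rpow_le_rpow_of_exponent_le hy (by norm_num)
    _ = (y ^ m) ^ (-(1 : ℝ) / (2 * m)) := by
        rw [← Real.rpow_natCast, ← Real.rpow_mul (by positivity)]
        congr 1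
        field_simp
    _ ≤ b ^ (-(1 : ℝ) / (2 * m)) :=
        Real.rpow_le_rpow_of_nonpos hb hby
          (div_nonpos_of_nonpos_of_nonneg (by norm_num) (by positivity))

/-- Carleman's condition: the series `Σ_{n ≥ 1} β_n^{-1/(2n)}` diverges. -/
theorem beta_carleman :
    ¬ Summable (fun n : ℕ => ((beta (n + 1) : ℝ)) ^ (-(1 : ℝ) / (2 * (n + 1)))) := by
  intro hs
  have hlower (n : ℕ) :
      (8 * ((n : ℝ) + 1))⁻¹ ≤ (beta (n + 1) : ℝ) ^ (-(1 : ℝ) / (2 * (n + 1))) := by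
    have hβ : (beta (n + 1) : ℝ) ≤ (8 * ((n : ℝ) + 1)) ^ (n + 1) := by
      exact_mod_cast beta_le_pow (n + 1) (x := n + 1) (by push_cast; rfl)
    have := inv_le_rpow_of_le_pow n.succ_ne_zero (by exact_mod_cast beta_pos (n + 1))
      (by linarith [(Nat.cast_nonneg n : (0 : ℝ) ≤ n)]) hβ
    simpa using this
  have hharmonic : Summable (fun n : ℕ => ((n + 1 : ℕ) : ℝ)⁻¹) := by
    refine ((hs.of_nonneg_of_le (fun n => by positivity) hlower).mul_left 8).congr fun n => ?_
    push_cast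
    field_simp
  exact Real.not_summable_natCast_inv ((summable_nat_add_iff 1).mp hharmonic)
end

section
/- Let G(z) = Σ_{i∈I'} p_i/(z - λ_i) where I' is finite, the λ_i are distinct reals, and p_i > 0 with Σ p_i = 1. Then the zeros of G are all real, and G has exactly one zero strictly between each pair of consecutive poles λ_i (when the λ_i are arranged in increasing order) and no other zeros; consequently G admits the factorization G(z) = (1/z) Π_{j∈J}(1 - μ_j/z) Π_{i∈I'}(1 - λ_i/z)^{-1} where {μ_j}_{j∈J} is the set of zeros of G, for all z ∈ ℂ ∖ ({0} ∪ {λ_i}). -/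
/-!
Clearing denominators, `G = P / Q` with `Q(z) = ∏ᵢ (z - λᵢ)` and
`P(z) = ∑ᵢ pᵢ ∏_{i' ≠ i} (z - λᵢ')`, a real polynomial that is monic of degree `k` because
`∑ pᵢ = 1`. At a pole, `P(λᵢ) = pᵢ ∏_{i' ≠ i} (λᵢ - λᵢ')` has sign `(-1)^#{i' > i}`, so `P`
changes sign across each of the `k` gaps between consecutive poles and has a root `μⱼ` in each.
These `k` distinct roots exhaust the degree, hence `P = ∏ⱼ (z - μⱼ)`, and every claim follows
from `G = ∏ⱼ (z - μⱼ) / ∏ᵢ (z - λᵢ)`.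
-/

open Polynomial Finset

section Numerator

variable {R ι : Type*} [CommRing R] [Fintype ι] [DecidableEq ι]

noncomputable def cauchyNumerator (lam p : ι → R) : R[X] :=
  ∑ i, C (p i) * ∏ i' ∈ univ.erase i, (X - C (lam i'))

variable (lam p : ι → R)

lemma eval_cauchyNumerator_self (i : ι) :
    (cauchyNumerator lam p).eval (lam i) = p i * ∏ i' ∈ univ.erase i, (lam i - lam i') := by
  rw [cauchyNumerator, eval_finsetSum, Finset.sum_eq_single i]
  · simp [eval_prod]
  · intro i' _ hi'
    simp only [eval_mul, eval_C, eval_prod, eval_sub, eval_X]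
    rw [Finset.prod_eq_zero (mem_erase.2 ⟨Ne.symm hi', mem_univ i⟩) (sub_self _), mul_zero]
  · simp

lemma map_cauchyNumerator {S : Type*} [CommRing S] (f : R →+* S) :
    (cauchyNumerator lam p).map f = cauchyNumerator (f ∘ lam) (f ∘ p) := by
  simp [cauchyNumerator, Polynomial.map_sum, Polynomial.map_prod]

lemma natDegree_prod_erase_X_sub_C [Nontrivial R] (i : ι) :
    (∏ i' ∈ univ.erase i, (X - C (lam i'))).natDegree = Fintype.card ι - 1 := by
  rw [natDegree_prod_of_monic _ _ fun _ _ => monic_X_sub_C _]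
  simp [card_erase_of_mem]

lemma natDegree_cauchyNumerator_le [Nontrivial R] :
    (cauchyNumerator lam p).natDegree ≤ Fintype.card ι - 1 :=
  natDegree_sum_le_of_forall_le _ _ fun i _ =>
    natDegree_C_mul_le _ _ |>.trans (natDegree_prod_erase_X_sub_C lam i).le

lemma coeff_cauchyNumerator [Nontrivial R] :
    (cauchyNumerator lam p).coeff (Fintype.card ι - 1) = ∑ i, p i := by
  rw [cauchyNumerator, finsetSum_coeff]
  refine Finset.sum_congr rfl fun i _ => ?_
  have hmonic : (∏ i' ∈ univ.erase i, (X - C (lam i'))).Monic :=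
    monic_prod_of_monic _ _ fun _ _ => monic_X_sub_C _
  rw [coeff_C_mul, ← natDegree_prod_erase_X_sub_C lam i, hmonic.coeff_natDegree, mul_one]

lemma monic_cauchyNumerator (hsum : ∑ i, p i = 1) : (cauchyNumerator lam p).Monic := by
  nontriviality R
  exact monic_of_natDegree_le_of_coeff_eq_one _ (natDegree_cauchyNumerator_le lam p)
    (by rw [coeff_cauchyNumerator, hsum])

lemma natDegree_cauchyNumerator [Nontrivial R] (hsum : ∑ i, p i = 1) :
    (cauchyNumerator lam p).natDegree = Fintype.card ι - 1 :=
  (natDegree_cauchyNumerator_le lam p).antisymm <|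
    le_natDegree_of_ne_zero (by rw [coeff_cauchyNumerator, hsum]; exact one_ne_zero)

end Numerator

lemma sum_div_sub_eq_eval_cauchyNumerator_div {K ι : Type*} [Field K] [Fintype ι] [DecidableEq ι]
    (lam p : ι → K) {z : K} (hz : ∀ i, z ≠ lam i) :
    ∑ i, p i / (z - lam i) = (cauchyNumerator lam p).eval z / ∏ i, (z - lam i) := by
  have hne : ∀ i, z - lam i ≠ 0 := fun i => sub_ne_zero.2 (hz i)
  rw [eq_div_iff (prod_ne_zero_iff.2 fun i _ => hne i), Finset.sum_mul, cauchyNumerator,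
    eval_finsetSum]
  refine Finset.sum_congr rfl fun i _ => ?_
  rw [← mul_prod_erase univ _ (mem_univ i)]
  simp only [eval_mul, eval_C, eval_prod, eval_sub, eval_X]
  field_simp [hne i]

section Sign

variable {R : Type*} [CommRing R] [LinearOrder R] [IsStrictOrderedRing R]

lemma neg_one_pow_card_Ioi_mul_prod_erase_pos {n : ℕ} {lam : Fin n → R} (hlam : StrictMono lam)
    (i : Fin n) :
    0 < (-1) ^ #(Ioi i) * ∏ i' ∈ univ.erase i, (lam i - lam i') := by
  have hsplit : univ.erase i = Iio i ∪ Ioi i := by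
    ext a
    simp [← lt_or_lt_iff_ne]
  have hflip :
      ∏ a ∈ Ioi i, (lam i - lam a) = (-1) ^ #(Ioi i) * ∏ a ∈ Ioi i, (lam a - lam i) := by
    rw [← prod_const, ← prod_mul_distrib]
    exact prod_congr rfl fun _ _ => by ring
  have hsq : ((-1 : R) ^ #(Ioi i)) * (-1) ^ #(Ioi i) = 1 := by
    rw [← mul_pow]; norm_num
  have hlt : 0 < ∏ a ∈ Iio i, (lam i - lam a) :=
    prod_pos fun a ha => sub_pos.2 (hlam (mem_Iio.1 ha))
  have hgt : 0 < ∏ a ∈ Ioi i, (lam a - lam i) :=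
    prod_pos fun a ha => sub_pos.2 (hlam (mem_Ioi.1 ha))
  have hdisj : Disjoint (Iio i) (Ioi i) :=
    disjoint_left.2 fun _ ha hb => lt_asymm (mem_Iio.1 ha) (mem_Ioi.1 hb)
  rw [hsplit, prod_union hdisj, hflip]
  set A := ∏ a ∈ Iio i, (lam i - lam a)
  set B := ∏ a ∈ Ioi i, (lam a - lam i)
  calc (0 : R) < A * B := mul_pos hlt hgt
    _ = _ := by linear_combination -A * B * hsq

lemma prod_erase_castSucc_mul_prod_erase_succ_neg {k : ℕ} {lam : Fin (k + 1) → R}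
    (hlam : StrictMono lam) (j : Fin k) :
    (∏ i' ∈ univ.erase j.castSucc, (lam j.castSucc - lam i'))
      * (∏ i' ∈ univ.erase j.succ, (lam j.succ - lam i')) < 0 := by
  have hcard : #(Ioi j.castSucc) = #(Ioi j.succ) + 1 := by
    simp only [Fin.card_Ioi, Fin.val_castSucc, Fin.val_succ]
    omega
  have hleft := neg_one_pow_card_Ioi_mul_prod_erase_pos hlam j.castSucc
  have hright := neg_one_pow_card_Ioi_mul_prod_erase_pos hlam j.succ
  rw [hcard, pow_succ] at hleft
  have hsq : ((-1 : R) ^ #(Ioi j.succ)) * (-1) ^ #(Ioi j.succ) = 1 := by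
    rw [← mul_pow]; norm_num
  nlinarith [mul_pos hleft hright]

end Sign

section Gaps

variable {α : Type*} [LinearOrder α] {k : ℕ} {lam : Fin (k + 1) → α}

lemma StrictMono.ne_of_mem_Ioo_castSucc_succ (hlam : StrictMono lam) {j : Fin k} {x : α}
    (hx : x ∈ Set.Ioo (lam j.castSucc) (lam j.succ)) (i : Fin (k + 1)) : x ≠ lam i := by
  rcases le_or_gt i j.castSucc with hi | hi
  · exact ((hlam.monotone hi).trans_lt hx.1).ne'
  · exact (hx.2.trans_le (hlam.monotone (Fin.castSucc_lt_iff_succ_le.1 hi))).ne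

lemma StrictMono.eq_of_mem_Ioo_castSucc_succ (hlam : StrictMono lam) {j j' : Fin k} {x : α}
    (hx : x ∈ Set.Ioo (lam j.castSucc) (lam j.succ))
    (hx' : x ∈ Set.Ioo (lam j'.castSucc) (lam j'.succ)) : j = j' := by
  by_contra hne
  rcases lt_or_gt_of_ne hne with h | h
  · exact lt_irrefl x ((hx.2.trans_le (hlam.monotone (Fin.succ_le_castSucc_iff.2 h))).trans hx'.1)
  · exact lt_irrefl x ((hx'.2.trans_le (hlam.monotone (Fin.succ_le_castSucc_iff.2 h))).trans hx.1)

end Gaps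

lemma exists_mem_Ioo_eq_zero_of_mul_neg {f : ℝ → ℝ} {a b : ℝ} (hab : a ≤ b)
    (hf : ContinuousOn f (Set.Icc a b)) (hsign : f a * f b < 0) :
    ∃ x ∈ Set.Ioo a b, f x = 0 := by
  rcases mul_neg_iff.1 hsign with ⟨ha, hb⟩ | ⟨ha, hb⟩
  · exact intermediate_value_Ioo' hab hf ⟨hb, ha⟩
  · exact intermediate_value_Ioo hab hf ⟨ha, hb⟩

lemma prod_X_sub_C_dvd_of_injective {R ι : Type*} [CommRing R] [IsDomain R] [Fintype ι]
    {P : R[X]} (hP : P ≠ 0) {μ : ι → R} (hμ : Function.Injective μ)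
    (hroot : ∀ j, P.IsRoot (μ j)) :
    ∏ j, (X - C (μ j)) ∣ P := by
  have hle : univ.val.map μ ≤ P.roots :=
    (Multiset.le_iff_subset (univ.nodup.map hμ)).2 fun a ha => by
      obtain ⟨j, -, rfl⟩ := Multiset.mem_map.1 ha
      exact (mem_roots hP).2 (hroot j)
  have hprod : ∏ j, (X - C (μ j)) = ((univ.val.map μ).map fun a => X - C a).prod := by
    rw [Multiset.map_map]; rfl
  exact hprod ▸ (Multiset.prod_X_sub_C_dvd_iff_le_roots hP _).2 hle

section RealRoots

variable {k : ℕ} {lam p : Fin (k + 1) → ℝ}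

lemma exists_isRoot_cauchyNumerator_mem_Ioo (hlam : StrictMono lam) (hp : ∀ i, 0 < p i)
    (j : Fin k) :
    ∃ x ∈ Set.Ioo (lam j.castSucc) (lam j.succ), (cauchyNumerator lam p).IsRoot x := by
  refine exists_mem_Ioo_eq_zero_of_mul_neg (hlam Fin.castSucc_lt_succ).le
    (cauchyNumerator lam p).continuous.continuousOn ?_
  rw [eval_cauchyNumerator_self, eval_cauchyNumerator_self]
  nlinarith [prod_erase_castSucc_mul_prod_erase_succ_neg hlam j,
    mul_pos (hp j.castSucc) (hp j.succ)]

lemma exists_cauchyNumerator_eq_prod_X_sub_C (hlam : StrictMono lam) (hp : ∀ i, 0 < p i)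
    (hsum : ∑ i, p i = 1) :
    ∃ μ : Fin k → ℝ, (∀ j, μ j ∈ Set.Ioo (lam j.castSucc) (lam j.succ)) ∧
      cauchyNumerator lam p = ∏ j, (X - C (μ j)) := by
  choose μ hμ hroot using exists_isRoot_cauchyNumerator_mem_Ioo hlam hp
  have hμinj : Function.Injective μ := fun j j' h =>
    hlam.eq_of_mem_Ioo_castSucc_succ (hμ j) (h ▸ hμ j')
  have hmonic := monic_cauchyNumerator lam p hsum
  refine ⟨μ, hμ, eq_of_monic_of_dvd_of_natDegree_le
    (monic_prod_of_monic _ _ fun j _ => monic_X_sub_C (μ j)) hmonic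
    (prod_X_sub_C_dvd_of_injective hmonic.ne_zero hμinj hroot) ?_⟩
  rw [natDegree_cauchyNumerator lam p hsum,
    natDegree_prod_of_monic _ _ fun j _ => monic_X_sub_C (μ j)]
  simp

end RealRoots

lemma sum_div_sub_eq_prod_div_prod_of_cauchyNumerator_eq {R K ι κ : Type*} [CommRing R] [Field K]
    [Fintype ι] [DecidableEq ι] [Fintype κ] (f : R →+* K) {lam p : ι → R} {μ : κ → R}
    (hP : cauchyNumerator lam p = ∏ j, (X - C (μ j))) {z : K} (hz : ∀ i, z ≠ f (lam i)) :
    ∑ i, f (p i) / (z - f (lam i)) = (∏ j, (z - f (μ j))) / ∏ i, (z - f (lam i)) := by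
  have hmap := map_cauchyNumerator lam p f
  rw [hP] at hmap
  refine (sum_div_sub_eq_eval_cauchyNumerator_div (f ∘ lam) (f ∘ p) hz).trans ?_
  simp [← hmap, Polynomial.map_prod, eval_prod]

lemma prod_one_sub_div_eq {K τ : Type*} [Field K] [Fintype τ] (c : τ → K) {z : K}
    (hz : z ≠ 0) :
    ∏ t, (1 - c t / z) = (∏ t, (z - c t)) / z ^ Fintype.card τ := by
  simp_rw [one_sub_div hz]
  rw [prod_div_distrib, prod_const, card_univ]

-- At a pole of `b` both sides are `0`, since `0⁻¹ = 0`.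
lemma prod_sub_div_prod_sub_eq {K ι κ : Type*} [Field K] [Fintype ι] [Fintype κ]
    (hcard : Fintype.card ι = Fintype.card κ + 1) (a : κ → K) (b : ι → K) {z : K}
    (hz : z ≠ 0) :
    (∏ j, (z - a j)) / ∏ i, (z - b i)
      = 1 / z * (∏ j, (1 - a j / z)) * (∏ i, (1 - b i / z))⁻¹ := by
  rw [prod_one_sub_div_eq a hz, prod_one_sub_div_eq b hz, hcard, inv_div, pow_succ]
  field_simp

/-- Zeros of the Cauchy transform `G(z) = Σᵢ pᵢ/(z - λᵢ)` of a finitely supported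
probability measure with distinct real atoms `λ₀ < λ₁ < … < λ_k` and positive
weights `pᵢ` summing to `1`: there are real numbers `μ_j`, one strictly between each
pair of consecutive poles, such that each `μ_j` is the unique zero of `G` in its gap,
`G` has no other zeros, and `G` factors as
`G(z) = (1/z) Π_j (1 - μ_j/z) Π_i (1 - λ_i/z)⁻¹` on `ℂ ∖ ({0} ∪ {λᵢ})`. -/
theorem cauchy_transform_zeros_and_factorization
    (k : ℕ) (lam : Fin (k + 1) → ℝ) (hlam : StrictMono lam)
    (p : Fin (k + 1) → ℝ) (hp : ∀ i, 0 < p i) (hsum : ∑ i, p i = 1)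
    (G : ℂ → ℂ) (hG : G = fun z => ∑ i, (p i : ℂ) / (z - (lam i : ℂ))) :
    ∃ μ : Fin k → ℝ,
      -- one zero strictly between each pair of consecutive poles
      (∀ j : Fin k, lam j.castSucc < μ j ∧ μ j < lam j.succ ∧ G (μ j) = 0) ∧
      -- uniqueness of the zero in each gap
      (∀ j : Fin k, ∀ x : ℝ, lam j.castSucc < x → x < lam j.succ →
        G (x : ℂ) = 0 → x = μ j) ∧
      -- all zeros of `G` are real and there are no zeros other than the `μ_j`
      (∀ z : ℂ, (∀ i, z ≠ (lam i : ℂ)) → G z = 0 → ∃ j : Fin k, z = (μ j : ℂ)) ∧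
      -- the factorization
      (∀ z : ℂ, z ≠ 0 → (∀ i, z ≠ (lam i : ℂ)) →
        G z = (1 / z) * (∏ j : Fin k, (1 - (μ j : ℂ) / z))
          * (∏ i : Fin (k + 1), (1 - (lam i : ℂ) / z))⁻¹) := by
  obtain ⟨μ, hμ, hP⟩ := exists_cauchyNumerator_eq_prod_X_sub_C hlam hp hsum
  have hG_eq : ∀ z : ℂ, (∀ i, z ≠ lam i) →
      G z = (∏ j, (z - μ j)) / ∏ i, (z - lam i) := fun z hz =>
    hG ▸ sum_div_sub_eq_prod_div_prod_of_cauchyNumerator_eq Complex.ofRealHom hP hz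
  have hzeros : ∀ z : ℂ, (∀ i, z ≠ lam i) → G z = 0 → ∃ j, z = μ j := by
    intro z hz hGz
    rw [hG_eq z hz, div_eq_zero_iff, prod_eq_zero_iff, prod_eq_zero_iff] at hGz
    rcases hGz with ⟨j, -, hj⟩ | ⟨i, -, hi⟩
    · exact ⟨j, sub_eq_zero.1 hj⟩
    · exact absurd (sub_eq_zero.1 hi) (hz i)
  have hnonpole : ∀ (j : Fin k) (x : ℝ), x ∈ Set.Ioo (lam j.castSucc) (lam j.succ) →
      ∀ i, (x : ℂ) ≠ lam i := fun j x hx i =>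
    Complex.ofReal_injective.ne (hlam.ne_of_mem_Ioo_castSucc_succ hx i)
  refine ⟨μ, fun j => ⟨(hμ j).1, (hμ j).2, ?_⟩, fun j x hx₁ hx₂ hGx => ?_, hzeros,
    fun z hz₀ hz => ?_⟩
  · rw [hG_eq _ (hnonpole j _ (hμ j)), prod_eq_zero (mem_univ j) (sub_self _), zero_div]
  · obtain ⟨j', hj'⟩ := hzeros x (hnonpole j x ⟨hx₁, hx₂⟩) hGx
    obtain rfl : x = μ j' := Complex.ofReal_injective hj'
    rw [hlam.eq_of_mem_Ioo_castSucc_succ ⟨hx₁, hx₂⟩ (hμ j')]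
  · rw [hG_eq z hz, prod_sub_div_prod_sub_eq (by simp) _ _ hz₀]
end
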